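/- arXiv:math/9903080 — 9 statements merged into one kernel-verified Lean document; each statement's English description precedes it below -/
import Mathlib

section
/- Consider the Kronecker pair K_{2k−1} (k ≥ 1) on ℂ^{2k−1}. Define w̃_λ := Σ_{j=0}^{k−1} λ^j e_{2j}. Then: (i) λ·ω₁(w̃_λ, w) + ω₂(w̃_λ, w) = 0 for every w ∈ ℂ^{2k−1} and every λ ∈ ℂ; (ii) the span of {w̃_λ : λ ∈ ℂ} equals the span of {e₀, e₂, …, e_{2k−2}} and has dimension k; (iii) if w_λ = Σ_j λ^j u_j (a finite sum, u_j ∈ ℂ^{2k−1}) is any family of vectors depending polynomially on λ such that λ·ω₁(w_λ, w) + ω₂(w_λ, w) = 0 for all w ∈ ℂ^{2k−1} and all λ ∈ ℂ, then there exists a scalar polynomial p ∈ ℂ[λ] with w_λ = p(λ)·w̃_λ for all λ. -/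
open Matrix

noncomputable section

/-- First form `ω₁` of the Kronecker pair on `ℂ^n`:
`ω₁(e_{2l}, e_{2l+1}) = 1`, matrix version. -/
def kronMat1 (n : ℕ) : Matrix (Fin n) (Fin n) ℂ := fun i j =>
  if Even i.val ∧ j.val = i.val + 1 then 1
  else if Even j.val ∧ i.val = j.val + 1 then -1 else 0

/-- Second form `ω₂` of the Kronecker pair on `ℂ^n`:
`ω₂(e_{2l+1}, e_{2l+2}) = 1`, matrix version. -/
def kronMat2 (n : ℕ) : Matrix (Fin n) (Fin n) ℂ := fun i j =>
  if ¬ Even i.val ∧ j.val = i.val + 1 then 1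
  else if ¬ Even j.val ∧ i.val = j.val + 1 then -1 else 0

/-- The bilinear form with matrix `M`. -/
def formOf {n : ℕ} (M : Matrix (Fin n) (Fin n) ℂ) (x y : Fin n → ℂ) : ℂ :=
  x ⬝ᵥ M.mulVec y

/-- `w̃_λ = Σ_{j<k} λ^j e_{2j}` in `ℂ^{2k-1}`. -/
def wtilde (k : ℕ) (lam : ℂ) : Fin (2 * k - 1) → ℂ := fun i =>
  if Even i.val then lam ^ (i.val / 2) else 0

/- ### Auxiliary lemmas -/
/- ### Auxiliary lemmas -/

lemma formOf_single {n : ℕ} (M : Matrix (Fin n) (Fin n) ℂ) (x : Fin n → ℂ) (m : Fin n) :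
    formOf M x (Pi.single m 1) = ∑ i, x i * M i m := by
  simp [formOf, Matrix.mulVec_single, dotProduct]

lemma formOf_eq_sum {n : ℕ} (M : Matrix (Fin n) (Fin n) ℂ) (x y : Fin n → ℂ) :
    formOf M x y = ∑ j, (∑ i, x i * M i j) * y j := by
  rw [formOf, Matrix.dotProduct_mulVec]
  simp [Matrix.vecMul, dotProduct, Finset.sum_mul]

lemma kron1_one {n : ℕ} {i j : Fin n} (h1 : i.val % 2 = 0) (h2 : j.val = i.val + 1) :
    kronMat1 n i j = 1 := by
  simp only [kronMat1]
  rw [if_pos ⟨Nat.even_iff.mpr h1, h2⟩]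

lemma kron1_neg {n : ℕ} {i j : Fin n} (h1 : j.val % 2 = 0) (h2 : i.val = j.val + 1) :
    kronMat1 n i j = -1 := by
  simp only [kronMat1]
  rw [if_neg, if_pos ⟨Nat.even_iff.mpr h1, h2⟩]
  rintro ⟨ha, hb⟩
  rw [Nat.even_iff] at ha
  omega

lemma kron1_zero {n : ℕ} {i j : Fin n} (h1 : j.val = i.val + 1 → i.val % 2 = 1)
    (h2 : i.val = j.val + 1 → j.val % 2 = 1) : kronMat1 n i j = 0 := by
  simp only [kronMat1]
  rw [if_neg, if_neg]
  · rintro ⟨ha, hb⟩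
    rw [Nat.even_iff] at ha
    have := h2 hb
    omega
  · rintro ⟨ha, hb⟩
    rw [Nat.even_iff] at ha
    have := h1 hb
    omega

lemma kron2_one {n : ℕ} {i j : Fin n} (h1 : i.val % 2 = 1) (h2 : j.val = i.val + 1) :
    kronMat2 n i j = 1 := by
  simp only [kronMat2]
  rw [if_pos ⟨by rw [Nat.even_iff]; omega, h2⟩]

lemma kron2_neg {n : ℕ} {i j : Fin n} (h1 : j.val % 2 = 1) (h2 : i.val = j.val + 1) :
    kronMat2 n i j = -1 := by
  simp only [kronMat2]
  rw [if_neg, if_pos ⟨by rw [Nat.even_iff]; omega, h2⟩]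
  rintro ⟨ha, hb⟩
  rw [Nat.even_iff] at ha
  omega

lemma kron2_zero {n : ℕ} {i j : Fin n} (h1 : j.val = i.val + 1 → i.val % 2 = 0)
    (h2 : i.val = j.val + 1 → j.val % 2 = 0) : kronMat2 n i j = 0 := by
  simp only [kronMat2]
  rw [if_neg, if_neg]
  · rintro ⟨ha, hb⟩
    rw [Nat.even_iff] at ha
    have := h2 hb
    omega
  · rintro ⟨ha, hb⟩
    rw [Nat.even_iff] at ha
    have := h1 hb
    omega

lemma sum_kron1_odd {n : ℕ} (x : Fin n → ℂ) (m : Fin n) (hm : m.val % 2 = 1) :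
    ∑ i, x i * kronMat1 n i m = x ⟨m.val - 1, by have := m.isLt; omega⟩ := by
  have hmlt := m.isLt
  rw [Finset.sum_eq_single (⟨m.val - 1, by omega⟩ : Fin n)]
  · rw [kron1_one (by simp only [Fin.val_mk]; omega) (by simp only [Fin.val_mk]; omega),
      mul_one]
  · intro i _ hi
    have hv : i.val ≠ m.val - 1 := fun hh => hi (Fin.ext (by simp only [Fin.val_mk]; omega))
    rw [kron1_zero (fun hc => by omega) (fun hc => by omega), mul_zero]
  · intro h'; exact absurd (Finset.mem_univ _) h'

lemma sum_kron1_even {n : ℕ} (x : Fin n → ℂ) (m : Fin n) (hm : m.val % 2 = 0) :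
    ∑ i, x i * kronMat1 n i m = if h : m.val + 1 < n then -x ⟨m.val + 1, h⟩ else 0 := by
  have hmlt := m.isLt
  split_ifs with h
  · rw [Finset.sum_eq_single (⟨m.val + 1, h⟩ : Fin n)]
    · rw [kron1_neg hm (by simp only [Fin.val_mk]), mul_neg_one]
    · intro i _ hi
      have hv : i.val ≠ m.val + 1 := fun hh => hi (Fin.ext (by simp only [Fin.val_mk]; omega))
      rw [kron1_zero (fun hc => by omega) (fun hc => by omega), mul_zero]
    · intro h'; exact absurd (Finset.mem_univ _) h'
  · apply Finset.sum_eq_zero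
    intro i _
    have hv := i.isLt
    rw [kron1_zero (fun hc => by omega) (fun hc => by omega), mul_zero]

lemma sum_kron2_odd {n : ℕ} (x : Fin n → ℂ) (m : Fin n) (hm : m.val % 2 = 1) :
    ∑ i, x i * kronMat2 n i m = if h : m.val + 1 < n then -x ⟨m.val + 1, h⟩ else 0 := by
  have hmlt := m.isLt
  split_ifs with h
  · rw [Finset.sum_eq_single (⟨m.val + 1, h⟩ : Fin n)]
    · rw [kron2_neg hm (by simp only [Fin.val_mk]), mul_neg_one]
    · intro i _ hi
      have hv : i.val ≠ m.val + 1 := fun hh => hi (Fin.ext (by simp only [Fin.val_mk]; omega))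
      rw [kron2_zero (fun hc => by omega) (fun hc => by omega), mul_zero]
    · intro h'; exact absurd (Finset.mem_univ _) h'
  · apply Finset.sum_eq_zero
    intro i _
    have hv := i.isLt
    rw [kron2_zero (fun hc => by omega) (fun hc => by omega), mul_zero]

lemma sum_kron2_even {n : ℕ} (x : Fin n → ℂ) (m : Fin n) (hm : m.val % 2 = 0) :
    ∑ i, x i * kronMat2 n i m
      = if h : 0 < m.val then x ⟨m.val - 1, by have := m.isLt; omega⟩ else 0 := by
  have hmlt := m.isLt
  split_ifs with h
  · rw [Finset.sum_eq_single (⟨m.val - 1, by omega⟩ : Fin n)]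
    · rw [kron2_one (by simp only [Fin.val_mk]; omega) (by simp only [Fin.val_mk]; omega),
        mul_one]
    · intro i _ hi
      have hv : i.val ≠ m.val - 1 := fun hh => hi (Fin.ext (by simp only [Fin.val_mk]; omega))
      rw [kron2_zero (fun hc => by omega) (fun hc => by omega), mul_zero]
    · intro h'; exact absurd (Finset.mem_univ _) h'
  · apply Finset.sum_eq_zero
    intro i _
    rw [kron2_zero (fun hc => by omega) (fun hc => by omega), mul_zero]

theorem kronecker_canonical_kernel_family (k : ℕ) (hk : 1 ≤ k) :
    -- (i)
    (∀ (lam : ℂ) (w : Fin (2 * k - 1) → ℂ),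
        lam * formOf (kronMat1 (2 * k - 1)) (wtilde k lam) w
          + formOf (kronMat2 (2 * k - 1)) (wtilde k lam) w = 0) ∧
    -- (ii)
    (Submodule.span ℂ (Set.range (wtilde k))
        = Submodule.span ℂ (Set.range fun j : Fin k =>
            (Pi.single (⟨2 * j.val, by have := j.isLt; omega⟩ : Fin (2 * k - 1)) 1 :
              Fin (2 * k - 1) → ℂ)) ∧
      Module.finrank ℂ (Submodule.span ℂ (Set.range (wtilde k))) = k) ∧
    -- (iii)
    (∀ (N : ℕ) (u : ℕ → Fin (2 * k - 1) → ℂ) (w : ℂ → Fin (2 * k - 1) → ℂ),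
        (∀ lam, w lam = ∑ j ∈ Finset.range N, lam ^ j • u j) →
        (∀ (lam : ℂ) (x : Fin (2 * k - 1) → ℂ),
            lam * formOf (kronMat1 (2 * k - 1)) (w lam) x
              + formOf (kronMat2 (2 * k - 1)) (w lam) x = 0) →
        ∃ p : Polynomial ℂ, ∀ lam, w lam = p.eval lam • wtilde k lam) := by
  have h0 : 0 < 2 * k - 1 := by omega
  have hspan : Submodule.span ℂ (Set.range (wtilde k))
      = Submodule.span ℂ (Set.range fun j : Fin k =>
          (Pi.single (⟨2 * j.val, by have := j.isLt; omega⟩ : Fin (2 * k - 1)) 1 :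
            Fin (2 * k - 1) → ℂ)) := by
    apply le_antisymm
    · rw [Submodule.span_le]
      rintro _ ⟨lam, rfl⟩
      have hrep : wtilde k lam = ∑ j : Fin k, lam ^ j.val •
          (Pi.single (⟨2 * j.val, by have := j.isLt; omega⟩ : Fin (2 * k - 1)) 1 :
            Fin (2 * k - 1) → ℂ) := by
        funext m
        rw [Finset.sum_apply]
        simp only [Pi.smul_apply, Pi.single_apply, smul_eq_mul]
        have hmlt := m.isLt
        rcases Nat.even_or_odd m.val with hm | hm
        · rw [Nat.even_iff] at hm
          rw [Finset.sum_eq_single (⟨m.val / 2, by omega⟩ : Fin k)]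
          · rw [if_pos (Fin.ext (show m.val = 2 * (m.val / 2) by omega)), mul_one]
            simp only [wtilde]
            rw [if_pos (Nat.even_iff.mpr hm)]
          · intro j _ hj
            rw [if_neg, mul_zero]
            intro hEq
            apply hj
            apply Fin.ext
            have : m.val = 2 * j.val := congrArg Fin.val hEq
            show j.val = m.val / 2
            omega
          · intro h'; exact absurd (Finset.mem_univ _) h'
        · rw [Nat.odd_iff] at hm
          simp only [wtilde]
          rw [if_neg (by rw [Nat.even_iff]; omega)]
          symm
          apply Finset.sum_eq_zero
          intro j _
          rw [if_neg, mul_zero]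
          intro hEq
          have : m.val = 2 * j.val := congrArg Fin.val hEq
          omega
      rw [hrep]
      exact Submodule.sum_mem _ fun j _ =>
        Submodule.smul_mem _ _ (Submodule.subset_span ⟨j, rfl⟩)
    · rw [Submodule.span_le]
      rintro _ ⟨j, rfl⟩
      classical
      set V : Matrix (Fin k) (Fin k) ℂ := Matrix.vandermonde (fun i : Fin k => (i.val : ℂ))
        with hV
      have hdet : V.det ≠ 0 := by
        rw [hV, Matrix.det_vandermonde_ne_zero_iff]
        intro a b hab
        exact Fin.ext (Nat.cast_inj.mp hab)
      have hinv : V⁻¹ * V = 1 := Matrix.nonsing_inv_mul V (isUnit_iff_ne_zero.mpr hdet)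
      have key : (Pi.single (⟨2 * j.val, by have := j.isLt; omega⟩ : Fin (2 * k - 1)) 1 :
            Fin (2 * k - 1) → ℂ)
          = ∑ i : Fin k, (V⁻¹ j i) • wtilde k (i.val : ℂ) := by
        funext m
        rw [Finset.sum_apply]
        simp only [Pi.smul_apply, smul_eq_mul, Pi.single_apply]
        have hmlt := m.isLt
        rcases Nat.even_or_odd m.val with hm | hm
        · rw [Nat.even_iff] at hm
          have h2 : m.val / 2 < k := by omega
          have hterm : ∀ i : Fin k,
              V⁻¹ j i * wtilde k (i.val : ℂ) m = V⁻¹ j i * V i ⟨m.val / 2, h2⟩ := by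
            intro i
            congr 1
            simp only [wtilde]
            rw [if_pos (Nat.even_iff.mpr hm), hV, Matrix.vandermonde_apply]
          rw [Finset.sum_congr rfl (fun i _ => hterm i), ← Matrix.mul_apply, hinv,
            Matrix.one_apply]
          by_cases hc : j = (⟨m.val / 2, h2⟩ : Fin k)
          · rw [if_pos hc, if_pos]
            apply Fin.ext
            have : j.val = m.val / 2 := congrArg Fin.val hc
            show m.val = 2 * j.val
            omega
          · rw [if_neg hc, if_neg]
            intro hEq
            apply hc
            apply Fin.ext
            have : m.val = 2 * j.val := congrArg Fin.val hEq
            show j.val = m.val / 2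
            omega
        · rw [Nat.odd_iff] at hm
          rw [if_neg, Finset.sum_eq_zero]
          · intro i _
            simp only [wtilde]
            rw [if_neg (by rw [Nat.even_iff]; omega), mul_zero]
          · intro hEq
            have : m.val = 2 * j.val := congrArg Fin.val hEq
            omega
      show (Pi.single (⟨2 * j.val, by have := j.isLt; omega⟩ : Fin (2 * k - 1)) 1 :
          Fin (2 * k - 1) → ℂ) ∈ (Submodule.span ℂ (Set.range (wtilde k)) : Set _)
      rw [key]
      exact Submodule.sum_mem _ fun i _ =>
        Submodule.smul_mem _ _ (Submodule.subset_span ⟨_, rfl⟩)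
  refine ⟨?_, ⟨hspan, ?_⟩, ?_⟩
  · -- (i)
    intro lam w
    rw [formOf_eq_sum, formOf_eq_sum, Finset.mul_sum, ← Finset.sum_add_distrib]
    apply Finset.sum_eq_zero
    intro j _
    have hj2 := j.isLt
    rcases Nat.even_or_odd j.val with hj | hj
    · rw [Nat.even_iff] at hj
      rw [sum_kron1_even _ _ hj, sum_kron2_even _ _ hj]
      have h1 : ∀ (h : j.val + 1 < 2 * k - 1), wtilde k lam ⟨j.val + 1, h⟩ = 0 := by
        intro h
        simp only [wtilde]
        rw [if_neg]
        rw [Nat.even_iff]; omega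
      have h2 : ∀ (h : 0 < j.val),
          wtilde k lam ⟨j.val - 1, by have := j.isLt; omega⟩ = 0 := by
        intro h
        simp only [wtilde]
        rw [if_neg]
        rw [Nat.even_iff]; omega
      split_ifs with hA hB hB <;> simp [h1, h2, *]
    · rw [Nat.odd_iff] at hj
      rw [sum_kron1_odd _ _ hj, sum_kron2_odd _ _ hj,
        dif_pos (show j.val + 1 < 2 * k - 1 by omega)]
      have e1 : wtilde k lam ⟨j.val - 1, by omega⟩ = lam ^ ((j.val - 1) / 2) := by
        simp only [wtilde]
        rw [if_pos (Nat.even_iff.mpr (by omega))]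
      have e2 : wtilde k lam ⟨j.val + 1, by omega⟩ = lam ^ ((j.val - 1) / 2 + 1) := by
        simp only [wtilde]
        rw [if_pos (Nat.even_iff.mpr (by omega))]
        congr 1
        omega
      rw [e1, e2, pow_succ]
      ring
  · -- (ii) finrank
    have hli : LinearIndependent ℂ (fun j : Fin k =>
        (Pi.single (⟨2 * j.val, by have := j.isLt; omega⟩ : Fin (2 * k - 1)) 1 :
          Fin (2 * k - 1) → ℂ)) := by
      have h := (Pi.basisFun ℂ (Fin (2 * k - 1))).linearIndependent.comp
        (fun j : Fin k => (⟨2 * j.val, by have := j.isLt; omega⟩ : Fin (2 * k - 1)))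
        (fun a b hab => Fin.ext (by
          have := congrArg Fin.val hab
          simp only [Fin.val_mk] at this
          omega))
      convert h using 2 with j
      simp [Pi.basisFun_apply, Function.comp]
    rw [hspan, finrank_span_eq_card hli, Fintype.card_fin]
  · -- (iii)
    intro N u w hw H
    have Hm : ∀ (lam : ℂ) (m : Fin (2 * k - 1)),
        lam * (∑ i, w lam i * kronMat1 (2 * k - 1) i m)
          + (∑ i, w lam i * kronMat2 (2 * k - 1) i m) = 0 := by
      intro lam m
      have := H lam (Pi.single m 1)
      rwa [formOf_single, formOf_single] at this
    have hzero : ∀ (lam : ℂ) (m : Fin (2 * k - 1)), m.val % 2 = 1 → w lam m = 0 := by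
      intro lam
      have key : ∀ (t : ℕ) (m : Fin (2 * k - 1)), m.val + 2 * t + 2 = 2 * k - 1 →
          w lam m = 0 := by
        intro t
        induction t with
        | zero =>
          intro m hm
          have htop : 2 * k - 2 < 2 * k - 1 := by omega
          have h := Hm lam ⟨2 * k - 2, htop⟩
          rw [sum_kron1_even _ _ (by simp only [Fin.val_mk]; omega),
            sum_kron2_even _ _ (by simp only [Fin.val_mk]; omega),
            dif_neg (by simp only [Fin.val_mk]; omega),
            dif_pos (by simp only [Fin.val_mk]; omega)] at h
          have hmeq : m = ⟨(⟨2 * k - 2, htop⟩ : Fin (2 * k - 1)).val - 1,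
              by simp only [Fin.val_mk]; omega⟩ :=
            Fin.ext (by simp only [Fin.val_mk]; omega)
          rw [hmeq]
          linear_combination h
        | succ t ih =>
          intro m hm
          have hlt : m.val + 1 < 2 * k - 1 := by omega
          have h := Hm lam ⟨m.val + 1, hlt⟩
          rw [sum_kron1_even _ _ (by simp only [Fin.val_mk]; omega),
            sum_kron2_even _ _ (by simp only [Fin.val_mk]; omega),
            dif_pos (by simp only [Fin.val_mk]; omega),
            dif_pos (by simp only [Fin.val_mk]; omega)] at h
          have h2 : w lam ⟨(⟨m.val + 1, hlt⟩ : Fin (2 * k - 1)).val + 1,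
              by simp only [Fin.val_mk]; omega⟩ = 0 :=
            ih _ (by simp only [Fin.val_mk]; omega)
          have hmeq : m = (⟨(⟨m.val + 1, hlt⟩ : Fin (2 * k - 1)).val - 1,
              by simp only [Fin.val_mk]; omega⟩ : Fin (2 * k - 1)) :=
            Fin.ext (by simp only [Fin.val_mk]; omega)
          rw [hmeq]
          linear_combination h + lam * h2
      intro m hm
      have hmlt := m.isLt
      exact key ((2 * k - 1 - (m.val + 2)) / 2) m (by omega)
    have heven : ∀ (lam : ℂ) (l : ℕ) (hl : 2 * l < 2 * k - 1),
        w lam ⟨2 * l, hl⟩ = lam ^ l * w lam ⟨0, h0⟩ := by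
      intro lam l
      induction l with
      | zero =>
        intro hl
        have : (⟨2 * 0, hl⟩ : Fin (2 * k - 1)) = ⟨0, h0⟩ := Fin.ext (by simp only [Fin.val_mk])
        rw [this, pow_zero, one_mul]
      | succ l ih =>
        intro hl
        have hodd : 2 * l + 1 < 2 * k - 1 := by omega
        have h := Hm lam ⟨2 * l + 1, hodd⟩
        rw [sum_kron1_odd _ _ (by simp only [Fin.val_mk]; omega),
          sum_kron2_odd _ _ (by simp only [Fin.val_mk]; omega),
          dif_pos (by simp only [Fin.val_mk]; omega)] at h
        have e1 : (⟨(⟨2 * l + 1, hodd⟩ : Fin (2 * k - 1)).val - 1,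
            by simp only [Fin.val_mk]; omega⟩ : Fin (2 * k - 1)) = ⟨2 * l, by omega⟩ :=
          Fin.ext (by simp only [Fin.val_mk]; omega)
        have e2 : (⟨(⟨2 * l + 1, hodd⟩ : Fin (2 * k - 1)).val + 1,
            by simp only [Fin.val_mk]; omega⟩ : Fin (2 * k - 1)) = ⟨2 * (l + 1), hl⟩ :=
          Fin.ext (by simp only [Fin.val_mk]; omega)
        rw [e1, e2, ih (by omega)] at h
        linear_combination -h
    have hkey : ∀ (lam : ℂ) (m : Fin (2 * k - 1)),
        w lam m = w lam ⟨0, h0⟩ * wtilde k lam m := by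
      intro lam m
      have hmlt := m.isLt
      rcases Nat.even_or_odd m.val with hm | hm
      · rw [Nat.even_iff] at hm
        have h2 : 2 * (m.val / 2) < 2 * k - 1 := by omega
        have hmeq : m = ⟨2 * (m.val / 2), h2⟩ := Fin.ext (by simp only [Fin.val_mk]; omega)
        rw [hmeq, heven lam _ h2]
        simp only [wtilde]
        rw [if_pos (Nat.even_iff.mpr (by omega))]
        have hq : (⟨2 * (m.val / 2), h2⟩ : Fin (2 * k - 1)).val / 2 = m.val / 2 := by
          simp only [Fin.val_mk]; omega
        rw [hq]
        ring
      · rw [Nat.odd_iff] at hm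
        rw [hzero lam m hm]
        simp only [wtilde]
        rw [if_neg (by rw [Nat.even_iff]; omega), mul_zero]
    refine ⟨∑ j ∈ Finset.range N, Polynomial.C (u j ⟨0, h0⟩) * Polynomial.X ^ j, ?_⟩
    intro lam
    have hev : (∑ j ∈ Finset.range N,
        Polynomial.C (u j ⟨0, h0⟩) * Polynomial.X ^ j).eval lam = w lam ⟨0, h0⟩ := by
      rw [hw lam, Polynomial.eval_finset_sum, Finset.sum_apply]
      apply Finset.sum_congr rfl
      intro j _
      rw [Polynomial.eval_mul, Polynomial.eval_C, Polynomial.eval_pow, Polynomial.eval_X,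
        Pi.smul_apply, smul_eq_mul, mul_comm]
    funext m
    rw [hkey lam m, Pi.smul_apply, smul_eq_mul, hev]
end
end

section
/- Consider the Kronecker pair K_{2k−1} (k ≥ 1) on ℂ^{2k−1}. For every pair (λ₁, λ₂) ∈ ℂ² with (λ₁, λ₂) ≠ (0,0), the radical of the alternating form λ₁ω₁ + λ₂ω₂ (the space of vectors u with λ₁ω₁(u, w) + λ₂ω₂(u, w) = 0 for all w) is one-dimensional, and it is spanned by the vector Σ_{j=0}^{k−1} λ₁^j λ₂^{k−1−j} e_{2j}. -/
open Matrix

noncomputable section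

def extFun {n : ℕ} (u : Fin n → ℂ) : ℕ → ℂ := fun t => if h : t < n then u ⟨t, h⟩ else 0

lemma extFun_zero {n : ℕ} (u : Fin n → ℂ) (t : ℕ) (h : n ≤ t) : extFun u t = 0 := by
  simp [extFun, Nat.not_lt.mpr h]

lemma sum_if_val {n : ℕ} (u : Fin n → ℂ) (t : ℕ) (c : ℂ) :
    (∑ i : Fin n, if i.val = t then c * u i else 0) = c * extFun u t := by
  by_cases h : t < n
  · rw [extFun, dif_pos h, Finset.sum_eq_single (⟨t, h⟩ : Fin n)]
    · simp
    · intro b _ hb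
      rw [if_neg]
      intro hbv; exact hb (Fin.ext hbv)
    · simp
  · rw [extFun, dif_neg h, mul_zero]
    apply Finset.sum_eq_zero
    intro i _
    rw [if_neg]
    omega

lemma sum_if_val' {n : ℕ} (u : Fin n → ℂ) (t : ℕ) (c : ℂ) :
    (∑ i : Fin n, if t = i.val + 1 then c * u i else 0)
      = if t = 0 then 0 else c * extFun u (t - 1) := by
  cases t with
  | zero => simp
  | succ s =>
    rw [if_neg (Nat.succ_ne_zero s)]
    have : ∀ i : Fin n, (if s + 1 = i.val + 1 then c * u i else 0)
        = (if i.val = s then c * u i else 0) := by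
      intro i
      congr 1
      simp [eq_comm]
    rw [Finset.sum_congr rfl (fun i _ => this i), sum_if_val]
    simp

lemma summand_eq {n : ℕ} (u : Fin n → ℂ) (l1 l2 : ℂ) (i j : Fin n) :
    u i * (l1 * kronMat1 n i j + l2 * kronMat2 n i j)
      = (if i.val = j.val + 1 then (-(if Even j.val then l1 else l2)) * u i else 0)
        + (if j.val = i.val + 1 then (if Even j.val then l2 else l1) * u i else 0) := by
  unfold kronMat1 kronMat2
  simp only [Nat.even_iff] at *
  split_ifs
  any_goals ring
  all_goals exfalso
  all_goals omega

lemma F_eq {n : ℕ} (u : Fin n → ℂ) (l1 l2 : ℂ) (j : Fin n) :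
    (∑ i : Fin n, u i * (l1 * kronMat1 n i j + l2 * kronMat2 n i j))
      = (if Even j.val then l2 else l1) * (if j.val = 0 then 0 else extFun u (j.val - 1))
        - (if Even j.val then l1 else l2) * extFun u (j.val + 1) := by
  rw [Finset.sum_congr rfl (fun i _ => summand_eq u l1 l2 i j), Finset.sum_add_distrib,
    sum_if_val, sum_if_val']
  by_cases hj : j.val = 0 <;> simp [hj] <;> ring

lemma form_sum {n : ℕ} (u w : Fin n → ℂ) (l1 l2 : ℂ) :
    l1 * formOf (kronMat1 n) u w + l2 * formOf (kronMat2 n) u w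
      = ∑ j : Fin n, (∑ i : Fin n, u i * (l1 * kronMat1 n i j + l2 * kronMat2 n i j)) * w j := by
  simp only [formOf, dotProduct, mulVec, Finset.mul_sum, Finset.sum_mul]
  rw [← Finset.sum_add_distrib, Finset.sum_comm]
  apply Finset.sum_congr rfl
  intro i _
  rw [← Finset.sum_add_distrib]
  apply Finset.sum_congr rfl
  intro j _
  ring

lemma key_iff {n : ℕ} (u : Fin n → ℂ) (l1 l2 : ℂ) :
    (∀ w, l1 * formOf (kronMat1 n) u w + l2 * formOf (kronMat2 n) u w = 0)
      ↔ ∀ j : Fin n,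
          (if Even j.val then l2 else l1) * (if j.val = 0 then 0 else extFun u (j.val - 1))
            = (if Even j.val then l1 else l2) * extFun u (j.val + 1) := by
  constructor
  · intro h j
    have h2 := h (Pi.single j 1)
    rw [form_sum, Finset.sum_eq_single j
      (fun b _ hb => by rw [Pi.single_eq_of_ne hb, mul_zero])
      (fun hj => absurd (Finset.mem_univ j) hj)] at h2
    rw [Pi.single_eq_same, mul_one, F_eq] at h2
    exact sub_eq_zero.mp h2
  · intro h w
    rw [form_sum]
    apply Finset.sum_eq_zero
    intro j _
    rw [F_eq, sub_eq_zero.mpr (h j), zero_mul]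

/-- The vector `Σ_{j<k} λ₁^j λ₂^{k-1-j} e_{2j}` in `ℂ^{2k-1}`. -/
def radVec (k : ℕ) (lam₁ lam₂ : ℂ) : Fin (2 * k - 1) → ℂ := fun i =>
  if Even i.val then lam₁ ^ (i.val / 2) * lam₂ ^ (k - 1 - i.val / 2) else 0

/-- the radical of `λ₁ω₁ + λ₂ω₂` on the Kronecker pair `K_{2k-1}`
is one-dimensional, spanned by `Σ_j λ₁^j λ₂^{k-1-j} e_{2j}`. -/
theorem kronecker_radical_one_dimensional (k : ℕ) (hk : 1 ≤ k)
    (lam₁ lam₂ : ℂ) (hne : (lam₁, lam₂) ≠ (0, 0)) :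
    (∀ u : Fin (2 * k - 1) → ℂ,
        (∀ w, lam₁ * formOf (kronMat1 (2 * k - 1)) u w
            + lam₂ * formOf (kronMat2 (2 * k - 1)) u w = 0)
          ↔ ∃ c : ℂ, u = c • radVec k lam₁ lam₂) ∧
    radVec k lam₁ lam₂ ≠ 0 := by
  have hlam : lam₁ ≠ 0 ∨ lam₂ ≠ 0 := by
    by_contra h
    push_neg at h
    exact hne (by rw [h.1, h.2])
  -- facts about radVec extended
  have hu : ∀ u : Fin (2*k-1) → ℂ, ∀ i : Fin (2*k-1), extFun u i.val = u i := by
    intro u i; simp [extFun]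
  have hV : ∀ (c : ℂ) (s : ℕ),
      extFun (c • radVec k lam₁ lam₂) s = c * extFun (radVec k lam₁ lam₂) s := by
    intro c s
    unfold extFun
    split
    · simp
    · simp
  have hVo : ∀ s : ℕ, ¬ Even s → extFun (radVec k lam₁ lam₂) s = 0 := by
    intro s hs
    unfold extFun
    split
    · exact if_neg hs
    · rfl
  have hVe : ∀ (s : ℕ) (h : s < 2*k-1), Even s →
      extFun (radVec k lam₁ lam₂) s = lam₁ ^ (s / 2) * lam₂ ^ (k - 1 - s / 2) := by
    intro s h hev
    unfold extFun
    rw [dif_pos h]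
    exact if_pos hev
  constructor
  · intro u
    rw [key_iff]
    constructor
    · intro hE
      have hUz : ∀ t, 2*k-1 ≤ t → extFun u t = 0 := fun t ht => extFun_zero u t ht
      have E : ∀ t, t < 2*k-1 →
          ((if Even t then lam₂ else lam₁) * (if t = 0 then 0 else extFun u (t-1))
            = (if Even t then lam₁ else lam₂) * extFun u (t+1)) := fun t h => hE ⟨t, h⟩
      -- the two families of concrete equations
      have E0 : lam₁ * extFun u 1 = 0 := by
        have := E 0 (by omega)
        rw [if_pos Even.zero, if_pos Even.zero, if_pos rfl, mul_zero] at this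
        exact this.symm
      have ES : ∀ m, 2*m+2 < 2*k-1 → lam₂ * extFun u (2*m+1) = lam₁ * extFun u (2*m+3) := by
        intro m hm
        have := E (2*m+2) hm
        have hev2 : Even (2*m+2) := ⟨m+1, by ring⟩
        rw [if_pos hev2, if_pos hev2, if_neg (by omega : ¬ (2*m+2 = 0)),
          show 2*m+2-1 = 2*m+1 from by omega, show 2*m+2+1 = 2*m+3 from by omega] at this
        exact this
      have Erec : ∀ m, 2*m+1 < 2*k-1 →
          lam₁ * extFun u (2*m) = lam₂ * extFun u (2*m+2) := by
        intro m hm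
        have := E (2*m+1) hm
        have hodd : ¬ Even (2*m+1) := by rw [Nat.even_iff]; omega
        rw [if_neg hodd, if_neg hodd, if_neg (by omega : ¬ (2*m+1 = 0)),
          show 2*m+1-1 = 2*m from by omega, show 2*m+1+1 = 2*m+2 from by omega] at this
        exact this
      -- all odd entries vanish
      have odd0 : ∀ m, extFun u (2*m+1) = 0 := by
        rcases hlam with h1 | h2
        · intro m
          induction m with
          | zero => exact (mul_eq_zero.mp E0).resolve_left h1
          | succ m ih =>
            by_cases h : 2*m+2 < 2*k-1
            · have := ES m h
              rw [ih, mul_zero] at this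
              have := (mul_eq_zero.mp this.symm).resolve_left h1
              rw [show 2*(m+1)+1 = 2*m+3 from by omega]
              exact this
            · exact hUz _ (by omega)
        · have aux : ∀ t m, k ≤ m + t → extFun u (2*m+1) = 0 := by
            intro t
            induction t with
            | zero => intro m hm; exact hUz _ (by omega)
            | succ t ih =>
              intro m hm
              by_cases h : 2*m+2 < 2*k-1
              · have h3 := ES m h
                have hih : extFun u (2*m+3) = 0 := by
                  rw [show 2*m+3 = 2*(m+1)+1 from by omega]
                  exact ih (m+1) (by omega)
                rw [hih, mul_zero] at h3
                exact (mul_eq_zero.mp h3).resolve_left h2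
              · exact hUz _ (by omega)
          intro m; exact aux k m (by omega)
      -- even entries
      by_cases hl2 : lam₂ = 0
      · have h1 : lam₁ ≠ 0 := hlam.resolve_right (not_not.mpr hl2)
        refine ⟨extFun u (2*k-2) / lam₁ ^ (k-1), ?_⟩
        funext i
        rw [Pi.smul_apply, smul_eq_mul]
        by_cases hev : Even i.val
        · rw [radVec, if_pos hev]
          rcases hev with ⟨m, hm⟩
          have hdiv : i.val / 2 = m := by omega
          by_cases hmk : m = k - 1
          · have hival : i.val = 2*k-2 := by omega
            rw [← hu u i, hival, show (2*k-2)/2 = k-1 from by omega,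
              show k-1-(k-1) = 0 from by omega, pow_zero,
              mul_one, div_mul_cancel₀ _ (pow_ne_zero _ h1)]
          · -- m < k-1 : entry vanishes, and so does the rad vec entry
            have hlt : 2*m+1 < 2*k-1 := by
              have := i.isLt; omega
            have := Erec m hlt
            rw [hl2, zero_mul] at this
            have hz : extFun u (2*m) = 0 := (mul_eq_zero.mp this).resolve_left h1
            rw [← hu u i, show i.val = 2*m from by omega, hz, hl2,
              zero_pow (by have := i.isLt; omega : k-1-(2*m)/2 ≠ 0), mul_zero, mul_zero]
        · rw [radVec, if_neg hev, mul_zero, ← hu u i]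
          have hodd : i.val % 2 = 1 := Nat.not_even_iff.mp hev
          rw [show i.val = 2*(i.val/2)+1 from by omega]
          exact odd0 _
      · -- lam₂ ≠ 0
        have evens : ∀ m, m ≤ k - 1 →
            extFun u (2*m) = (extFun u 0 / lam₂ ^ (k-1)) * (lam₁ ^ m * lam₂ ^ (k-1-m)) := by
          intro m
          induction m with
          | zero =>
            intro _
            simp only [mul_zero, Nat.sub_zero, pow_zero, one_mul]
            rw [div_mul_cancel₀ _ (pow_ne_zero _ hl2)]
          | succ m ih =>
            intro hm
            have hrec := Erec m (by omega)
            apply mul_left_cancel₀ hl2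
            rw [show 2*(m+1) = 2*m+2 from by omega, ← hrec, ih (by omega),
              show k-1-m = (k-1-(m+1))+1 from by omega, pow_succ, pow_succ]
            ring
        refine ⟨extFun u 0 / lam₂ ^ (k-1), ?_⟩
        funext i
        rw [Pi.smul_apply, smul_eq_mul]
        by_cases hev : Even i.val
        · rw [radVec, if_pos hev]
          rcases hev with ⟨m, hm⟩
          have hdiv : i.val / 2 = m := by omega
          have := evens m (by have := i.isLt; omega)
          rw [show 2*m = i.val from by omega, hu u i] at this
          rw [hdiv]
          exact this
        · rw [radVec, if_neg hev, mul_zero, ← hu u i]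
          have hodd : i.val % 2 = 1 := Nat.not_even_iff.mp hev
          rw [show i.val = 2*(i.val/2)+1 from by omega]
          exact odd0 _
    · rintro ⟨c, rfl⟩
      intro j
      by_cases hev : Even j.val
      · have hodd1 : ¬ Even (j.val + 1) := by rw [Nat.even_iff] at hev ⊢; omega
        rw [if_pos hev, if_pos hev, hV c (j.val+1), hVo _ hodd1]
        by_cases hj0 : j.val = 0
        · rw [if_pos hj0]; ring
        · have hodd2 : ¬ Even (j.val - 1) := by
            rw [Nat.even_iff] at hev ⊢; omega
          rw [if_neg hj0, hV c (j.val-1), hVo _ hodd2]; ring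
      · have hodd : j.val % 2 = 1 := Nat.not_even_iff.mp hev
        have hjlt : j.val < 2*k-1 := j.isLt
        set t := j.val with htdef
        set m := t / 2 with hmdef
        have hm1 : t - 1 = 2*m := by omega
        have hm2 : t + 1 = 2*(m+1) := by omega
        have hmk : m + 1 ≤ k - 1 := by omega
        rw [if_neg hev, if_neg hev, if_neg (by omega : ¬ (t = 0)), hV, hV,
          hVe (t-1) (by omega) ⟨m, by omega⟩, hVe (t+1) (by omega) ⟨m+1, by omega⟩,
          show (t-1)/2 = m from by omega, show (t+1)/2 = m+1 from by omega,
          show k-1-m = (k-1-(m+1))+1 from by omega, pow_succ]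
        ring
  · intro h0
    by_cases hl2 : lam₂ = 0
    · have h1 : lam₁ ≠ 0 := hlam.resolve_right (not_not.mpr hl2)
      have := congrFun h0 ⟨2*k-2, by omega⟩
      rw [radVec] at this
      simp only [Pi.zero_apply] at this
      have hev : Even (2*k-2) := ⟨k-1, by omega⟩
      rw [show (2*k-2)/2 = k-1 from by omega, show k-1-(k-1) = 0 from by omega,
        pow_zero, mul_one, if_pos hev] at this
      exact h1 (pow_eq_zero_iff'.mp this).1
    · have := congrFun h0 ⟨0, by omega⟩
      rw [radVec] at this
      simp only [Pi.zero_apply] at this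
      rw [if_pos (Even.zero : Even 0), Nat.zero_div, pow_zero, one_mul,
        Nat.sub_zero] at this
      exact hl2 (pow_eq_zero_iff'.mp this).1
end
end

section
/- Let V be a vector space over a field, and let B₁, B₂ : V × V → V be bilinear alternating maps. Let (H_i)_{i≥0} and (H'_j)_{j≥0} be two sequences in V such that B₁(H₀, f) = 0 and B₁(H'₀, f) = 0 for all f ∈ V (the anchoring condition), and such that the Lenard recursion B₂(H_i, f) = −B₁(H_{i+1}, f) and B₂(H'_j, f) = −B₁(H'_{j+1}, f) holds for all f ∈ V and all i, j ≥ 0. Then B₁(H_i, H'_j) = 0 and B₂(H_i, H'_j) = 0 for all i, j ≥ 0. -/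
/-! Pairing two Lenard recursions against each other and using skew-symmetry of both brackets
gives `B₁ (H (i + 1)) (H' j) = B₁ (H i) (H' (j + 1))`: the index can be moved from one family to
the other. Moving all of it onto `H'` reduces `B₁ (H i) (H' j)` to `B₁ (H 0) (H' (i + j))`, which
vanishes by anchoring; the recursion then turns `B₂ (H i) (H' j)` into `-B₁ (H (i + 1)) (H' j)`. -/

namespace LinearMap

variable {R M N : Type*} [CommRing R] [AddCommGroup M] [AddCommGroup N] [Module R M] [Module R N]
  {B₁ B₂ : M →ₗ[R] M →ₗ[R] N} {H H' : ℕ → M}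

theorem IsAlt.apply_succ_eq_apply_succ (h₁ : B₁.IsAlt) (h₂ : B₂.IsAlt)
    (hrec : ∀ i f, B₂ (H i) f = -B₁ (H (i + 1)) f)
    (hrec' : ∀ j f, B₂ (H' j) f = -B₁ (H' (j + 1)) f) (i j : ℕ) :
    B₁ (H (i + 1)) (H' j) = B₁ (H i) (H' (j + 1)) :=
  calc B₁ (H (i + 1)) (H' j)
      = -B₂ (H i) (H' j) := by rw [hrec, neg_neg]
    _ = B₂ (H' j) (H i) := h₂.neg _ _
    _ = -B₁ (H' (j + 1)) (H i) := hrec' j _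
    _ = B₁ (H i) (H' (j + 1)) := h₁.neg _ _

theorem IsAlt.apply_eq_zero_of_anchored (h₁ : B₁.IsAlt) (h₂ : B₂.IsAlt)
    (hanch : ∀ f, B₁ (H 0) f = 0)
    (hrec : ∀ i f, B₂ (H i) f = -B₁ (H (i + 1)) f)
    (hrec' : ∀ j f, B₂ (H' j) f = -B₁ (H' (j + 1)) f) (i j : ℕ) :
    B₁ (H i) (H' j) = 0 := by
  induction i generalizing j with
  | zero => exact hanch _
  | succ i ih => rw [h₁.apply_succ_eq_apply_succ h₂ hrec hrec', ih]

end LinearMap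

theorem anchored_lenard_families_commute_general
    {K V : Type*} [Field K] [AddCommGroup V] [Module K V]
    (B₁ B₂ : V →ₗ[K] V →ₗ[K] V)
    (halt₁ : ∀ f, B₁ f f = 0) (halt₂ : ∀ f, B₂ f f = 0)
    (H H' : ℕ → V)
    (hanch : ∀ f, B₁ (H 0) f = 0)
    (hrec : ∀ i f, B₂ (H i) f = - B₁ (H (i + 1)) f)
    (hrec' : ∀ j f, B₂ (H' j) f = - B₁ (H' (j + 1)) f) :
    ∀ i j, B₁ (H i) (H' j) = 0 ∧ B₂ (H i) (H' j) = 0 := by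
  have hB₁ := LinearMap.IsAlt.apply_eq_zero_of_anchored halt₁ halt₂ hanch hrec hrec'
  intro i j
  exact ⟨hB₁ i j, by rw [hrec, hB₁, neg_zero]⟩

/-- two anchored formal λ-families are in involution with respect to
both brackets. -/
theorem anchored_lenard_families_commute
    {K V : Type*} [Field K] [AddCommGroup V] [Module K V]
    (B₁ B₂ : V →ₗ[K] V →ₗ[K] V)
    (halt₁ : ∀ f, B₁ f f = 0) (halt₂ : ∀ f, B₂ f f = 0)
    (H H' : ℕ → V)
    (hanch : ∀ f, B₁ (H 0) f = 0) (hanch' : ∀ f, B₁ (H' 0) f = 0)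
    (hrec : ∀ i f, B₂ (H i) f = - B₁ (H (i + 1)) f)
    (hrec' : ∀ j f, B₂ (H' j) f = - B₁ (H' (j + 1)) f) :
    ∀ i j, B₁ (H i) (H' j) = 0 ∧ B₂ (H i) (H' j) = 0 :=
  anchored_lenard_families_commute_general B₁ B₂ halt₁ halt₂ H H' hanch hrec hrec'
end

section
/- Let V be a vector space over a field, and let B₁, B₂ : V × V → V be bilinear alternating maps. Let (H_i)_{i≥0} be a sequence in V satisfying the Lenard recursion B₂(H_i, f) = −B₁(H_{i+1}, f) for all f ∈ V and all i ≥ 0 (no anchoring condition is assumed). Then B₁(H_i, H_j) = 0 and B₂(H_i, H_j) = 0 for all i, j ≥ 0. -/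
/-!
Skew-symmetry of both brackets and the recursion give
B₁(H_{i+1}, H_j) = −B₂(H_i, H_j) = B₂(H_j, H_i) = −B₁(H_{j+1}, H_i) = B₁(H_i, H_{j+1}),
so B₁(H_i, H_j) depends only on i + j. Writing i + j as 2k or 2k + 1, it equals
B₁(H_k, H_k) = 0 or B₁(H_{k+1}, H_k) = −B₂(H_k, H_k) = 0. The recursion then transfers
the vanishing from B₁ to B₂.
-/

namespace LinearMap

variable {R M N : Type*} [CommSemiring R] [AddCommMonoid M] [AddCommGroup N]
  [Module R M] [Module R N]

def IsFormalLambdaFamily (B₁ B₂ : M →ₗ[R] M →ₗ[R] N) (H : ℕ → M) : Prop :=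
  ∀ i f, B₂ (H i) f = -B₁ (H (i + 1)) f

namespace IsFormalLambdaFamily

variable {B₁ B₂ : M →ₗ[R] M →ₗ[R] N} {H : ℕ → M}

theorem apply₁_succ_left (hH : IsFormalLambdaFamily B₁ B₂ H) (i : ℕ) (f : M) :
    B₁ (H (i + 1)) f = -B₂ (H i) f := by
  rw [hH, neg_neg]

theorem apply₁_succ_left_eq_succ_right (hH : IsFormalLambdaFamily B₁ B₂ H)
    (h₁ : B₁.IsAlt) (h₂ : B₂.IsAlt) (i j : ℕ) :
    B₁ (H (i + 1)) (H j) = B₁ (H i) (H (j + 1)) := by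
  rw [hH.apply₁_succ_left, h₂.neg, hH, h₁.neg]

theorem apply₁_eq_apply₁_zero_add (hH : IsFormalLambdaFamily B₁ B₂ H)
    (h₁ : B₁.IsAlt) (h₂ : B₂.IsAlt) (i j : ℕ) :
    B₁ (H i) (H j) = B₁ (H 0) (H (i + j)) := by
  induction i generalizing j with
  | zero => rw [zero_add]
  | succ i ih =>
    rw [hH.apply₁_succ_left_eq_succ_right h₁ h₂, ih, add_right_comm, add_assoc]

theorem apply₁_eq_zero (hH : IsFormalLambdaFamily B₁ B₂ H)
    (h₁ : B₁.IsAlt) (h₂ : B₂.IsAlt) (i j : ℕ) : B₁ (H i) (H j) = 0 := by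
  rw [hH.apply₁_eq_apply₁_zero_add h₁ h₂]
  obtain ⟨k, hk | hk⟩ := Nat.even_or_odd' (i + j)
  · rw [hk, two_mul, ← hH.apply₁_eq_apply₁_zero_add h₁ h₂, h₁.self_eq_zero]
  · rw [hk, show 2 * k + 1 = (k + 1) + k by ring, ← hH.apply₁_eq_apply₁_zero_add h₁ h₂,
      hH.apply₁_succ_left, h₂.self_eq_zero, neg_zero]

theorem apply₂_eq_zero (hH : IsFormalLambdaFamily B₁ B₂ H)
    (h₁ : B₁.IsAlt) (h₂ : B₂.IsAlt) (i j : ℕ) : B₂ (H i) (H j) = 0 := by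
  rw [hH, hH.apply₁_eq_zero h₁ h₂, neg_zero]

end IsFormalLambdaFamily

end LinearMap

/-- the members of a single (not necessarily anchored) formal
λ-family are in involution with respect to both brackets. -/
theorem lenard_family_commutes
    {K V : Type*} [Field K] [AddCommGroup V] [Module K V]
    (B₁ B₂ : V →ₗ[K] V →ₗ[K] V)
    (halt₁ : ∀ f, B₁ f f = 0) (halt₂ : ∀ f, B₂ f f = 0)
    (H : ℕ → V)
    (hrec : ∀ i f, B₂ (H i) f = - B₁ (H (i + 1)) f) :
    ∀ i j, B₁ (H i) (H j) = 0 ∧ B₂ (H i) (H j) = 0 := by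
  have hH : LinearMap.IsFormalLambdaFamily B₁ B₂ H := hrec
  exact fun i j => ⟨hH.apply₁_eq_zero halt₁ halt₂ i j, hH.apply₂_eq_zero halt₁ halt₂ i j⟩
end

section
/- Let V be a vector space over a field F, and let B₁, B₂ : V × V → V be bilinear alternating maps, each satisfying the Jacobi identity. Suppose that for one particular pair λ₁, λ₂ ∈ F with λ₁ ≠ 0 and λ₂ ≠ 0 the bracket λ₁B₁ + λ₂B₂ also satisfies the Jacobi identity. Then for every μ₁, μ₂ ∈ F the bracket μ₁B₁ + μ₂B₂ satisfies the Jacobi identity. -/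
/-!
The Jacobiator is quadratic in the bracket: for `B = μ₁B₁ + μ₂B₂` it expands as
`μ₁² J(B₁,B₁) + μ₁μ₂ (J(B₁,B₂) + J(B₂,B₁)) + μ₂² J(B₂,B₂)`, where `J(B,C)` is the mixed
Jacobiator. The outer terms vanish by hypothesis, and the Jacobi identity for one combination
with `λ₁λ₂ ≠ 0` forces the symmetric mixed term to vanish, hence the whole pencil is Jacobi.
-/

def JacobiId {K V : Type*} [Field K] [AddCommGroup V] [Module K V]
    (B : V →ₗ[K] V →ₗ[K] V) : Prop :=
  ∀ f g h, B (B f g) h + B (B g h) f + B (B h f) g = 0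

section Jacobiator

variable {R V : Type*} [CommRing R] [AddCommGroup V] [Module R V]

def jacobiator (B C : V →ₗ[R] V →ₗ[R] V) (f g h : V) : V :=
  B (C f g) h + B (C g h) f + B (C h f) g

theorem jacobiator_smul_add_smul (B C : V →ₗ[R] V →ₗ[R] V) (a b : R) (f g h : V) :
    jacobiator (a • B + b • C) (a • B + b • C) f g h =
      (a * a) • jacobiator B B f g h + (a * b) • (jacobiator B C f g h + jacobiator C B f g h)
        + (b * b) • jacobiator C C f g h := by
  simp only [jacobiator, LinearMap.add_apply, LinearMap.smul_apply, map_add, map_smul]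
  module

end Jacobiator

section Field

variable {K V : Type*} [Field K] [AddCommGroup V] [Module K V]

theorem jacobiId_iff_jacobiator_eq_zero (B : V →ₗ[K] V →ₗ[K] V) :
    JacobiId B ↔ ∀ f g h, jacobiator B B f g h = 0 :=
  Iff.rfl

theorem JacobiId.jacobiator_eq_zero {B : V →ₗ[K] V →ₗ[K] V} (hB : JacobiId B) (f g h : V) :
    jacobiator B B f g h = 0 :=
  hB f g h

theorem jacobiator_add_jacobiator_swap_eq_zero {B C : V →ₗ[K] V →ₗ[K] V}
    (hB : JacobiId B) (hC : JacobiId C) {a b : K} (ha : a ≠ 0) (hb : b ≠ 0)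
    (hBC : JacobiId (a • B + b • C)) (f g h : V) :
    jacobiator B C f g h + jacobiator C B f g h = 0 := by
  have hexp := jacobiator_smul_add_smul B C a b f g h
  rw [hBC.jacobiator_eq_zero, hB.jacobiator_eq_zero, hC.jacobiator_eq_zero, smul_zero,
    smul_zero, zero_add, add_zero] at hexp
  exact (smul_eq_zero.1 hexp.symm).resolve_left (mul_ne_zero ha hb)

end Field

theorem pencil_jacobi_of_one_combination_general
    {K V : Type*} [Field K] [AddCommGroup V] [Module K V]
    (B₁ B₂ : V →ₗ[K] V →ₗ[K] V)
    (hjac₁ : JacobiId B₁) (hjac₂ : JacobiId B₂)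
    (l₁ l₂ : K) (hl₁ : l₁ ≠ 0) (hl₂ : l₂ ≠ 0)
    (hjac : JacobiId (l₁ • B₁ + l₂ • B₂)) :
    ∀ m₁ m₂ : K, JacobiId (m₁ • B₁ + m₂ • B₂) := by
  intro m₁ m₂
  rw [jacobiId_iff_jacobiator_eq_zero]
  intro f g h
  rw [jacobiator_smul_add_smul, hjac₁.jacobiator_eq_zero, hjac₂.jacobiator_eq_zero,
    jacobiator_add_jacobiator_swap_eq_zero hjac₁ hjac₂ hl₁ hl₂ hjac f g h]
  simp only [smul_zero, add_zero]

/-- if `B₁`, `B₂` and one genuine linear combination `λ₁B₁ + λ₂B₂`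
(with `λ₁ ≠ 0`, `λ₂ ≠ 0`) satisfy the Jacobi identity, then every linear
combination `μ₁B₁ + μ₂B₂` does. -/
theorem pencil_jacobi_of_one_combination
    {K V : Type*} [Field K] [AddCommGroup V] [Module K V]
    (B₁ B₂ : V →ₗ[K] V →ₗ[K] V)
    (halt₁ : ∀ f, B₁ f f = 0) (halt₂ : ∀ f, B₂ f f = 0)
    (hjac₁ : JacobiId B₁) (hjac₂ : JacobiId B₂)
    (l₁ l₂ : K) (hl₁ : l₁ ≠ 0) (hl₂ : l₂ ≠ 0)
    (hjac : JacobiId (l₁ • B₁ + l₂ • B₂)) :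
    ∀ m₁ m₂ : K, JacobiId (m₁ • B₁ + m₂ • B₂) :=
  pencil_jacobi_of_one_combination_general B₁ B₂ hjac₁ hjac₂ l₁ l₂ hl₁ hl₂ hjac
end

section
/- For the open Toda lattice of dimension 2k+1 (k ≥ 1), let D ∈ ℂ[v₀, …, v_{2k}] be the determinant of the symmetric tridiagonal matrix ι(v). Then D is a Casimir polynomial for the second bracket: for every j ∈ {0, …, 2k}, the polynomial identity Σ_{i=0}^{2k} (∂D/∂v_i) · Π₂(v)_{ij} = 0 holds in ℂ[v₀, …, v_{2k}]. -/
open Matrix MvPolynomial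

noncomputable section

/-- The second Toda bracket matrix `Π₂` of the `(2k+1)`-dimensional open Toda
lattice, with polynomial entries. -/
def toda2 (k : ℕ) : Matrix (Fin (2 * k + 1)) (Fin (2 * k + 1))
    (MvPolynomial (Fin (2 * k + 1)) ℂ) :=
  Matrix.of fun i j =>
    if j.val = i.val + 1 then -(X i * X j)
    else if i.val = j.val + 1 then X i * X j
    else if h : j.val = i.val + 2 then
      (if Even i.val then
        -2 * (X (⟨i.val + 1, by have := j.isLt; omega⟩ : Fin (2 * k + 1))) ^ 2
       else C (-(1/2) : ℂ) * (X i * X j))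
    else if h' : i.val = j.val + 2 then
      (if Even j.val then
        2 * (X (⟨j.val + 1, by have := i.isLt; omega⟩ : Fin (2 * k + 1))) ^ 2
       else C ((1/2) : ℂ) * (X i * X j))
    else 0

/-- The symmetric tridiagonal matrix `ι(v)` with diagonal `v₀, v₂, …, v_{2k}`
and off-diagonal `v₁, v₃, …, v_{2k-1}`, with entries in the polynomial ring. -/
def iotaMat (k : ℕ) : Matrix (Fin (k + 1)) (Fin (k + 1))
    (MvPolynomial (Fin (2 * k + 1)) ℂ) :=
  Matrix.of fun i j =>
    if i = j then X (⟨2 * i.val, by have := i.isLt; omega⟩ : Fin (2 * k + 1))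
    else if h : j.val = i.val + 1 then
      X (⟨2 * i.val + 1, by have := j.isLt; omega⟩ : Fin (2 * k + 1))
    else if h' : i.val = j.val + 1 then
      X (⟨2 * j.val + 1, by have := i.isLt; omega⟩ : Fin (2 * k + 1))
    else 0

variable {R : Type*} [CommRing R]

/-- Tridiagonal symmetric matrix with shift `s`. -/
def tridS (a b : ℕ → R) (s n : ℕ) : Matrix (Fin n) (Fin n) R :=
  Matrix.of fun i j =>
    if i.val = j.val then a (s + i.val)
    else if j.val = i.val + 1 then b (s + i.val)
    else if i.val = j.val + 1 then b (s + j.val)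
    else 0

/-- Continuant: determinant of the tridiagonal block starting at row `s`, of size `m`. -/
def contS (a b : ℕ → R) : ℕ → ℕ → R
  | _, 0 => 1
  | s, 1 => a s
  | s, (m+2) => a s * contS a b (s+1) (m+1) - (b s)^2 * contS a b (s+2) m

theorem det_tridS (a b : ℕ → R) : ∀ n s, (tridS a b s n).det = contS a b s n := by
  intro n
  induction n using Nat.strong_induction_on with
  | _ n ih =>
  intro s
  match n with
  | 0 => simp [contS]
  | 1 => simp [contS, tridS]
  | (n+2) =>
    rw [det_succ_row_zero]
    rw [Fin.sum_univ_succ, Fin.sum_univ_succ]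
    have hz : ∀ x : Fin n, (-1:R) ^ (((x.succ.succ : Fin (n+2))) : ℕ) *
        (tridS a b s (n+2)) 0 x.succ.succ *
        det ((tridS a b s (n+2)).submatrix Fin.succ x.succ.succ.succAbove) = 0 := by
      intro x
      have : (tridS a b s (n+2)) 0 x.succ.succ = 0 := by
        simp only [tridS, of_apply]
        rw [if_neg, if_neg, if_neg] <;> simp [Fin.val_succ] <;> omega
      rw [this]; ring
    rw [Finset.sum_eq_zero (fun x _ => hz x), add_zero]
    have h00 : (tridS a b s (n+2)) 0 0 = a s := by simp [tridS]
    have hsub0 : (tridS a b s (n+2)).submatrix Fin.succ ((0 : Fin (n+2)).succAbove)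
        = tridS a b (s+1) (n+1) := by
      ext i j
      simp only [submatrix_apply, Fin.succAbove_zero, tridS, of_apply, Fin.val_succ]
      have e1 : s + (i.val + 1) = s + 1 + i.val := by omega
      have e2 : s + (j.val + 1) = s + 1 + j.val := by omega
      rw [e1, e2]
      split_ifs <;> first | rfl | omega
    have h01 : (tridS a b s (n+2)) 0 1 = b s := by
      simp only [tridS, of_apply]
      rw [if_neg, if_pos] <;> simp
    have hN : ((tridS a b s (n+2)).submatrix Fin.succ ((1 : Fin (n+2)).succAbove)).det
        = b s * contS a b (s+2) n := by
      set N := (tridS a b s (n+2)).submatrix Fin.succ ((1 : Fin (n+2)).succAbove) with hNdef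
      rw [det_succ_column_zero]
      rw [Fin.sum_univ_succ]
      have hz2 : ∀ x : Fin n, (-1:R) ^ (((x.succ : Fin (n+1))) : ℕ) * N x.succ 0 *
          det (N.submatrix x.succ.succAbove Fin.succ) = 0 := by
        intro x
        have : N x.succ 0 = 0 := by
          simp only [hNdef, submatrix_apply, tridS, of_apply]
          have h1 : ((1:Fin (n+2)).succAbove 0) = (0 : Fin (n+2)) := by
            apply Fin.ext; simp [Fin.succAbove]
          rw [h1]
          rw [if_neg, if_neg, if_neg] <;> simp [Fin.val_succ] <;> omega
        rw [this]; ring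
      rw [Finset.sum_eq_zero (fun x _ => hz2 x), add_zero]
      have hN00 : N 0 0 = b s := by
        simp only [hNdef, submatrix_apply, tridS, of_apply]
        have h1 : ((1:Fin (n+2)).succAbove 0) = (0 : Fin (n+2)) := by
          apply Fin.ext; simp [Fin.succAbove]
        rw [h1]
        rw [if_neg (by simp), if_neg (by simp), if_pos (by simp)]
        simp
      have hNsub : N.submatrix ((0 : Fin (n+1)).succAbove) Fin.succ = tridS a b (s+2) n := by
        ext i j
        simp only [hNdef, submatrix_apply, Fin.succAbove_zero, tridS, of_apply, Fin.val_succ]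
        have hc : ((1:Fin (n+2)).succAbove j.succ) = (⟨j.val+2, by omega⟩ : Fin (n+2)) := by
          apply Fin.ext
          simp [Fin.succAbove, Fin.lt_iff_val_lt_val]
        rw [hc]
        simp only [Fin.val_succ]
        have e1 : s + (i.val + 1 + 1) = s + 2 + i.val := by omega
        have e2 : s + (j.val + 2) = s + 2 + j.val := by omega
        rw [e1, e2]
        split_ifs <;> first | rfl | omega
      rw [hN00, hNsub, ih n (by omega)]
      simp
    simp only [Fin.succ_zero_eq_one, Fin.val_zero, Fin.val_succ, pow_zero, Fin.val_one] at *
    rw [h00, hsub0, ih (n+1) (by omega), h01, hN]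
    simp [contS]
    ring

/-- the variable `vₙ` as a polynomial, `0` if out of range -/
def tvar (k n : ℕ) : MvPolynomial (Fin (2*k+1)) ℂ :=
  if h : n < 2*k+1 then X ⟨n, h⟩ else 0

def av (k t : ℕ) : MvPolynomial (Fin (2*k+1)) ℂ := tvar k (2*t)
def bv (k t : ℕ) : MvPolynomial (Fin (2*k+1)) ℂ := tvar k (2*t+1)

def FF (k s m : ℕ) : MvPolynomial (Fin (2*k+1)) ℂ := contS (av k) (bv k) s m

lemma FF_zero (k s : ℕ) : FF k s 0 = 1 := rfl
lemma FF_one (k s : ℕ) : FF k s 1 = av k s := rfl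
lemma FF_front (k s m : ℕ) :
    FF k s (m+2) = av k s * FF k (s+1) (m+1) - (bv k s)^2 * FF k (s+2) m := rfl

lemma FF_back (k : ℕ) : ∀ m s, FF k s (m+2) =
    av k (s+m+1) * FF k s (m+1) - (bv k (s+m))^2 * FF k s m := by
  intro m
  induction m using Nat.strong_induction_on with
  | _ m ih =>
  intro s
  match m with
  | 0 =>
    rw [FF_front, show (0+1:ℕ) = 1 from rfl, show s+0+1 = s+1 from rfl,
      show s+0 = s from rfl]
    simp only [FF_one, FF_zero]
    ring
  | 1 =>
    rw [FF_front, show (1+1:ℕ) = 0+2 from rfl]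
    simp only [FF_front]
    rw [show (0+1:ℕ) = 1 from rfl]
    simp only [FF_one, FF_zero]
    rw [show s+1+1 = s+2 from rfl]
    ring
  | (m+2) =>
    rw [FF_front, show (m+2+1:ℕ) = (m+1)+2 from rfl, ih (m+1) (by omega) (s+1),
      ih m (by omega) (s+2), FF_front k s (m+1), FF_front k s m,
      (by omega : s+1+(m+1)+1 = s+(m+2)+1), (by omega : s+1+(m+1) = s+(m+2)),
      (by omega : s+2+m+1 = s+(m+2)+1), (by omega : s+2+m = s+(m+2))]
    ring

lemma pderiv_tvar (k : ℕ) (i : Fin (2*k+1)) (n : ℕ) (hn : n < 2*k+1) :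
    pderiv i (tvar k n) = if i.val = n then 1 else 0 := by
  rw [tvar, dif_pos hn, pderiv_X, Pi.single_apply]
  congr 1
  simp [Fin.ext_iff, eq_comm]

lemma pd_even (k l : ℕ) (hl : l ≤ k) : ∀ m s, s + m ≤ k + 1 →
    pderiv (⟨2*l, by omega⟩ : Fin (2*k+1)) (FF k s m) =
    if s ≤ l ∧ l < s + m then FF k s (l - s) * FF k (l+1) (s + m - l - 1) else 0 := by
  intro m
  induction m using Nat.strong_induction_on with
  | _ m ih =>
  intro s hsm
  match m with
  | 0 =>
    rw [FF_zero, if_neg (by omega)]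
    exact pderiv_one
  | 1 =>
    rw [FF_one, av, pderiv_tvar k _ _ (by omega)]
    by_cases h : l = s
    · rw [if_pos (by simp only [Fin.val_mk]; omega), if_pos (by omega)]
      subst h
      simp [FF_zero]
    · rw [if_neg (by simp only [Fin.val_mk]; omega), if_neg (by omega)]
  | (m+2) =>
    rw [FF_front, map_sub, pderiv_mul, pderiv_mul, pderiv_pow,
        ih (m+1) (by omega) (s+1) (by omega), ih m (by omega) (s+2) (by omega)]
    have hbv : pderiv (⟨2*l, by omega⟩ : Fin (2*k+1)) (bv k s) = 0 := by
      rw [bv, pderiv_tvar k _ _ (by omega), if_neg (by simp only [Fin.val_mk]; omega)]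
    have hav : pderiv (⟨2*l, by omega⟩ : Fin (2*k+1)) (av k s) =
        if l = s then 1 else 0 := by
      rw [av, pderiv_tvar k _ _ (by omega)]
      by_cases h : l = s
      · rw [if_pos (by simp only [Fin.val_mk]; omega), if_pos h]
      · rw [if_neg (by simp only [Fin.val_mk]; omega), if_neg h]
    rw [hbv, hav]
    by_cases h1 : l = s
    · subst h1
      rw [if_pos rfl, if_neg (by omega), if_neg (by omega), if_pos (by omega)]
      have e1 : l + (m+2) - l - 1 = m + 1 := by omega
      rw [Nat.sub_self, e1, FF_zero]
      ring
    · rw [if_neg h1]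
      by_cases h2 : l = s + 1
      · subst h2
        rw [if_pos (by omega), if_neg (by omega), if_pos (by omega)]
        have e1 : s + 1 - s = 1 := by omega
        have e2 : s + 1 - (s+1) = 0 := by omega
        have e3 : s + 1 + (m+1) - (s+1) - 1 = m := by omega
        have e4 : s + (m+2) - (s+1) - 1 = m := by omega
        rw [e1, e2, e3, e4, FF_zero, FF_one]
        ring
      · by_cases h3 : s + 2 ≤ l ∧ l < s + m + 2
        · rw [if_pos (by omega), if_pos (by omega), if_pos (by omega)]
          have e1 : l - s = (l - s - 2) + 2 := by omega
          rw [e1, FF_front]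
          have e4 : l - s - 2 + 1 = l - (s+1) := by omega
          have e5 : l - s - 2 = l - (s + 2) := by omega
          have e6 : s + 1 + (m+1) - l - 1 = s + (m+2) - l - 1 := by omega
          have e7 : s + 2 + m - l - 1 = s + (m+2) - l - 1 := by omega
          rw [e4, e5, e6, e7]
          ring
        · rw [if_neg (by omega), if_neg (by omega), if_neg (by omega)]
          ring

lemma pd_odd (k l : ℕ) (hl : l < k) : ∀ m s, s + m ≤ k + 1 →
    pderiv (⟨2*l+1, by omega⟩ : Fin (2*k+1)) (FF k s m) =
    if s ≤ l ∧ l + 2 ≤ s + m then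
      -(2 * bv k l * (FF k s (l - s) * FF k (l+2) (s + m - l - 2))) else 0 := by
  intro m
  induction m using Nat.strong_induction_on with
  | _ m ih =>
  intro s hsm
  match m with
  | 0 =>
    rw [FF_zero, if_neg (by omega)]
    exact pderiv_one
  | 1 =>
    rw [FF_one, av, pderiv_tvar k _ _ (by omega),
      if_neg (by simp only [Fin.val_mk]; omega), if_neg (by omega)]
  | (m+2) =>
    rw [FF_front, map_sub, pderiv_mul, pderiv_mul, pderiv_pow,
        ih (m+1) (by omega) (s+1) (by omega), ih m (by omega) (s+2) (by omega)]
    have hav : pderiv (⟨2*l+1, by omega⟩ : Fin (2*k+1)) (av k s) = 0 := by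
      rw [av, pderiv_tvar k _ _ (by omega), if_neg (by simp only [Fin.val_mk]; omega)]
    have hbv : pderiv (⟨2*l+1, by omega⟩ : Fin (2*k+1)) (bv k s) =
        if l = s then 1 else 0 := by
      rw [bv, pderiv_tvar k _ _ (by omega)]
      by_cases h : l = s
      · rw [if_pos (by simp only [Fin.val_mk]; omega), if_pos h]
      · rw [if_neg (by simp only [Fin.val_mk]; omega), if_neg h]
    rw [hav, hbv]
    by_cases h1 : l = s
    · subst h1
      rw [if_pos rfl, if_neg (by omega), if_neg (by omega), if_pos (by omega)]
      have e1 : l + (m+2) - l - 2 = m := by omega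
      rw [Nat.sub_self, e1, FF_zero]
      ring
    · rw [if_neg h1]
      by_cases h4 : s ≤ l ∧ l + 2 ≤ s + (m + 2)
      · by_cases h2 : l = s + 1
        · subst h2
          rw [if_pos (by omega), if_neg (by omega), if_pos (by omega)]
          have e1 : s + 1 - s = 1 := by omega
          have e2 : s + 1 - (s+1) = 0 := by omega
          have e3 : s + 1 + (m+1) - (s+1) - 2 = m - 1 := by omega
          have e4 : s + (m+2) - (s+1) - 2 = m - 1 := by omega
          rw [e1, e2, e3, e4, FF_zero, FF_one]
          ring
        · rw [if_pos (by omega), if_pos (by omega), if_pos (by omega)]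
          have e1 : l - s = (l - s - 2) + 2 := by omega
          rw [e1, FF_front]
          have e4 : l - s - 2 + 1 = l - (s+1) := by omega
          have e5 : l - s - 2 = l - (s + 2) := by omega
          have e6 : s + 1 + (m+1) - l - 2 = s + (m+2) - l - 2 := by omega
          have e7 : s + 2 + m - l - 2 = s + (m+2) - l - 2 := by omega
          rw [e4, e5, e6, e7]
          ring
      · rw [if_neg h4]
        by_cases h2 : l = s + 1
        · subst h2
          rw [if_neg (by omega), if_neg (by omega)]
          ring
        · rw [if_neg (by omega), if_neg (by omega)]
          ring

lemma iota_eq (k : ℕ) : iotaMat k = tridS (av k) (bv k) 0 (k+1) := by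
  ext i j
  have hi := i.isLt
  have hj := j.isLt
  simp only [iotaMat, tridS, of_apply, Fin.ext_iff, Nat.zero_add, av, bv, tvar]
  split_ifs <;> first | rfl | omega

lemma det_iota (k : ℕ) : (iotaMat k).det = FF k 0 (k+1) := by
  rw [iota_eq, det_tridS]; rfl

lemma toda2_zero (k : ℕ) (i j : Fin (2*k+1)) (h1 : ¬ j.val = i.val+1) (h2 : ¬ i.val = j.val+1)
    (h3 : ¬ j.val = i.val+2) (h4 : ¬ i.val = j.val+2) : toda2 k i j = 0 := by
  simp only [toda2, of_apply]
  rw [if_neg h1, if_neg h2, dif_neg h3, dif_neg h4]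

lemma toda2_E1 (k : ℕ) (i j : Fin (2*k+1)) (h : j.val = i.val + 1) :
    toda2 k i j = -(tvar k i.val * tvar k j.val) := by
  simp only [toda2, of_apply]
  rw [if_pos h, tvar, tvar, dif_pos i.isLt, dif_pos j.isLt]

lemma toda2_E2 (k : ℕ) (i j : Fin (2*k+1)) (h : i.val = j.val + 1) :
    toda2 k i j = tvar k i.val * tvar k j.val := by
  simp only [toda2, of_apply]
  rw [if_neg (by omega), if_pos h, tvar, tvar, dif_pos i.isLt, dif_pos j.isLt]

lemma toda2_E3 (k : ℕ) (i j : Fin (2*k+1)) (h : j.val = i.val + 2) (he : Even i.val) :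
    toda2 k i j = -2 * (tvar k (i.val+1))^2 := by
  have hj := j.isLt
  simp only [toda2, of_apply]
  rw [if_neg (by omega), if_neg (by omega), dif_pos h, if_pos he, tvar, dif_pos (by omega)]

lemma toda2_E4 (k : ℕ) (i j : Fin (2*k+1)) (h : j.val = i.val + 2) (he : ¬ Even i.val) :
    toda2 k i j = C (-(1/2) : ℂ) * (tvar k i.val * tvar k j.val) := by
  simp only [toda2, of_apply]
  rw [if_neg (by omega), if_neg (by omega), dif_pos h, if_neg he, tvar, tvar,
    dif_pos i.isLt, dif_pos j.isLt]

lemma toda2_E5 (k : ℕ) (i j : Fin (2*k+1)) (h : i.val = j.val + 2) (he : Even j.val) :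
    toda2 k i j = 2 * (tvar k (j.val+1))^2 := by
  have hi := i.isLt
  simp only [toda2, of_apply]
  rw [if_neg (by omega), if_neg (by omega), dif_neg (by omega), dif_pos h, if_pos he,
    tvar, dif_pos (by omega)]

lemma toda2_E6 (k : ℕ) (i j : Fin (2*k+1)) (h : i.val = j.val + 2) (he : ¬ Even j.val) :
    toda2 k i j = C ((1/2) : ℂ) * (tvar k i.val * tvar k j.val) := by
  simp only [toda2, of_apply]
  rw [if_neg (by omega), if_neg (by omega), dif_neg (by omega), dif_pos h, if_neg he,
    tvar, tvar, dif_pos i.isLt, dif_pos j.isLt]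

/-- the determinant of `ι(v)` is a Casimir polynomial for the
second open Toda bracket. -/
theorem toda_det_is_casimir (k : ℕ) (hk : 1 ≤ k) :
    ∀ j : Fin (2 * k + 1),
      ∑ i : Fin (2 * k + 1), pderiv i (iotaMat k).det * toda2 k i j = 0 := by
  intro j
  simp only [det_iota k]
  have hjlt := j.isLt
  rcases Nat.even_or_odd j.val with ⟨m, hmm⟩ | ⟨m, hmm⟩
  · have hmk : m ≤ k := by omega
    rcases Nat.eq_zero_or_pos m with h0 | h1
    · -- case A : j.val = 0
      subst h0
      have hj : j.val = 2*0 := by omega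
      have hz : ∀ x ∈ (Finset.univ : Finset (Fin (2*k+1))),
          x ∉ ({⟨2*0+1, by omega⟩, ⟨2*1, by omega⟩} : Finset (Fin (2*k+1))) →
          pderiv x (FF k 0 (k+1)) * toda2 k x j = 0 := by
        intro x _ hx
        simp only [Finset.mem_insert, Finset.mem_singleton, Fin.ext_iff, Fin.val_mk] at hx
        push_neg at hx
        rw [toda2_zero k x j (by omega) (by omega) (by omega) (by omega), mul_zero]
      rw [← Finset.sum_subset (Finset.subset_univ _) hz,
        Finset.sum_pair (by simp only [ne_eq, Fin.ext_iff, Fin.val_mk]; omega),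
        pd_odd k 0 (by omega) (k+1) 0 (by omega),
        pd_even k 1 (by omega) (k+1) 0 (by omega),
        toda2_E2 k _ j (by simp only [Fin.val_mk]; omega),
        toda2_E5 k _ j (by simp only [Fin.val_mk]; omega) ⟨0, by omega⟩,
        if_pos (by omega), if_pos (by omega)]
      simp only [Fin.val_mk, hj]
      rw [(by omega : 0+(k+1)-0-2 = k-1), (by omega : 0+(k+1)-1-1 = k-1),
        (by omega : (1:ℕ)-0 = 1), (by omega : (0:ℕ)-0 = 0)]
      rw [show tvar k (2*0+1) = bv k 0 from rfl, show tvar k (2*0) = av k 0 from rfl,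
        show ((0:ℕ)+2) = 1+1 from rfl]
      simp only [FF_zero, FF_one]
      ring
    · -- even, m = m'+1
      obtain ⟨m', rfl⟩ : ∃ m', m = m'+1 := ⟨m-1, by omega⟩
      have hj : j.val = 2*m'+2 := by omega
      have R2 := FF_back k m' 0
      rw [(by omega : 0+m'+1 = m'+1), (by omega : 0+m' = m')] at R2
      by_cases hC : m' + 2 ≤ k
      · -- case C: interior
        have hz : ∀ x ∈ (Finset.univ : Finset (Fin (2*k+1))),
            x ∉ ({⟨2*m', by omega⟩, ⟨2*m'+1, by omega⟩, ⟨2*(m'+1)+1, by omega⟩,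
              ⟨2*(m'+2), by omega⟩} : Finset (Fin (2*k+1))) →
            pderiv x (FF k 0 (k+1)) * toda2 k x j = 0 := by
          intro x _ hx
          have := x.isLt
          simp only [Finset.mem_insert, Finset.mem_singleton, Fin.ext_iff, Fin.val_mk] at hx
          push_neg at hx
          rw [toda2_zero k x j (by omega) (by omega) (by omega) (by omega), mul_zero]
        have R1 := FF_front k (m'+1) (k-m'-2)
        rw [(by omega : k-m'-2+2 = k-m'), (by omega : k-m'-2+1 = k-m'-1),
          show m'+1+1 = m'+2 from rfl, show m'+1+2 = m'+3 from rfl] at R1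
        rw [← Finset.sum_subset (Finset.subset_univ _) hz,
          Finset.sum_insert (by simp only [Finset.mem_insert, Finset.mem_singleton,
            Fin.ext_iff, Fin.val_mk]; omega),
          Finset.sum_insert (by simp only [Finset.mem_insert, Finset.mem_singleton,
            Fin.ext_iff, Fin.val_mk]; omega),
          Finset.sum_pair (by simp only [ne_eq, Fin.ext_iff, Fin.val_mk]; omega),
          pd_even k m' (by omega) (k+1) 0 (by omega),
          pd_odd k m' (by omega) (k+1) 0 (by omega),
          pd_odd k (m'+1) (by omega) (k+1) 0 (by omega),
          pd_even k (m'+2) (by omega) (k+1) 0 (by omega),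
          toda2_E3 k _ j (by simp only [Fin.val_mk]; omega)
            ⟨m', by simp only [Fin.val_mk]; omega⟩,
          toda2_E1 k _ j (by simp only [Fin.val_mk]; omega),
          toda2_E2 k _ j (by simp only [Fin.val_mk]; omega),
          toda2_E5 k _ j (by simp only [Fin.val_mk]; omega) ⟨m'+1, by omega⟩,
          if_pos (by omega), if_pos (by omega), if_pos (by omega), if_pos (by omega)]
        simp only [Fin.val_mk, Nat.sub_zero, hj]
        rw [(by omega : 0+(k+1)-m'-1 = k-m'), (by omega : 0+(k+1)-m'-2 = k-m'-1),
          (by omega : 0+(k+1)-(m'+1)-2 = k-m'-2), (by omega : 0+(k+1)-(m'+2)-1 = k-m'-2),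
          show m'+1+2 = m'+3 from rfl, show m'+2+1 = m'+3 from rfl,
          show (2*m'+2+1:ℕ) = 2*(m'+1)+1 from by ring,
          show (2*m'+2:ℕ) = 2*(m'+1) from by ring,
          show tvar k (2*m'+1) = bv k m' from rfl,
          show tvar k (2*(m'+1)+1) = bv k (m'+1) from rfl,
          show tvar k (2*(m'+1)) = av k (m'+1) from rfl,
          R1, R2]
        ring
      · -- case B: m'+1 = k
        have hB : m'+1 = k := by omega
        have hz : ∀ x ∈ (Finset.univ : Finset (Fin (2*k+1))),
            x ∉ ({⟨2*m', by omega⟩, ⟨2*m'+1, by omega⟩} : Finset (Fin (2*k+1))) →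
            pderiv x (FF k 0 (k+1)) * toda2 k x j = 0 := by
          intro x _ hx
          have := x.isLt
          simp only [Finset.mem_insert, Finset.mem_singleton, Fin.ext_iff, Fin.val_mk] at hx
          push_neg at hx
          rw [toda2_zero k x j (by omega) (by omega) (by omega) (by omega), mul_zero]
        rw [← Finset.sum_subset (Finset.subset_univ _) hz,
          Finset.sum_pair (by simp only [ne_eq, Fin.ext_iff, Fin.val_mk]; omega),
          pd_even k m' (by omega) (k+1) 0 (by omega),
          pd_odd k m' (by omega) (k+1) 0 (by omega),
          toda2_E3 k _ j (by simp only [Fin.val_mk]; omega)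
            ⟨m', by simp only [Fin.val_mk]; omega⟩,
          toda2_E1 k _ j (by simp only [Fin.val_mk]; omega),
          if_pos (by omega), if_pos (by omega)]
        simp only [Fin.val_mk, Nat.sub_zero, hj]
        rw [(by omega : 0+(k+1)-m'-1 = 1), (by omega : 0+(k+1)-m'-2 = 0),
          show (2*m'+2:ℕ) = 2*(m'+1) from by ring,
          show tvar k (2*m'+1) = bv k m' from rfl,
          show tvar k (2*(m'+1)) = av k (m'+1) from rfl]
        simp only [FF_zero, FF_one]
        ring
  · -- odd : j.val = 2*m+1
    have hmk : m < k := by omega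
    have hhalf : (C ((1/2 : ℂ)) : MvPolynomial (Fin (2*k+1)) ℂ) * 2 = 1 := by
      rw [show (2 : MvPolynomial (Fin (2*k+1)) ℂ) = C 2 from (map_ofNat C 2).symm, ← C_mul]
      norm_num
    have hneg : (C (-(1/2 : ℂ)) : MvPolynomial (Fin (2*k+1)) ℂ) * 2 = -1 := by
      rw [show (2 : MvPolynomial (Fin (2*k+1)) ℂ) = C 2 from (map_ofNat C 2).symm, ← C_mul]
      norm_num
    rcases Nat.eq_zero_or_pos m with h0 | h1
    · subst h0
      have hj : j.val = 2*0+1 := by omega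
      by_cases hk2 : 2 ≤ k
      · -- case A'' : m = 0, k ≥ 2
        have hz : ∀ x ∈ (Finset.univ : Finset (Fin (2*k+1))),
            x ∉ ({⟨2*0, by omega⟩, ⟨2*1, by omega⟩, ⟨2*1+1, by omega⟩} :
              Finset (Fin (2*k+1))) →
            pderiv x (FF k 0 (k+1)) * toda2 k x j = 0 := by
          intro x _ hx
          have := x.isLt
          simp only [Finset.mem_insert, Finset.mem_singleton, Fin.ext_iff, Fin.val_mk] at hx
          push_neg at hx
          rw [toda2_zero k x j (by omega) (by omega) (by omega) (by omega), mul_zero]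
        have R := FF_front k 1 (k-2)
        rw [(by omega : k-2+2 = k), (by omega : k-2+1 = k-1),
          show (1+1:ℕ) = 2 from rfl, show (1+2:ℕ) = 3 from rfl] at R
        rw [← Finset.sum_subset (Finset.subset_univ _) hz,
          Finset.sum_insert (by simp only [Finset.mem_insert, Finset.mem_singleton,
            Fin.ext_iff, Fin.val_mk]; omega),
          Finset.sum_pair (by simp only [ne_eq, Fin.ext_iff, Fin.val_mk]; omega),
          pd_even k 0 (by omega) (k+1) 0 (by omega),
          pd_even k 1 (by omega) (k+1) 0 (by omega),
          pd_odd k 1 (by omega) (k+1) 0 (by omega),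
          toda2_E1 k _ j (by simp only [Fin.val_mk]; omega),
          toda2_E2 k _ j (by simp only [Fin.val_mk]; omega),
          toda2_E6 k _ j (by simp only [Fin.val_mk]; omega)
            (by simp only [Nat.even_iff]; omega),
          if_pos (by omega), if_pos (by omega), if_pos (by omega)]
        simp only [Fin.val_mk, Nat.sub_zero, hj]
        rw [(by omega : 0+(k+1)-1-2 = k-2), (by omega : 0+(k+1)-1-1 = k-1),
          (by omega : 0+(k+1)-1 = k),
          show (0+1:ℕ) = 1 from rfl, show (1+1:ℕ) = 2 from rfl, show (1+2:ℕ) = 3 from rfl,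
          show tvar k (2*0+1) = bv k 0 from rfl, show tvar k (2*0) = av k 0 from rfl,
          show tvar k (2*1) = av k 1 from rfl, show tvar k (2*1+1) = bv k 1 from rfl]
        simp only [FF_zero, FF_one]
        linear_combination (-(av k 0 * bv k 0 * bv k 1^2 * FF k 3 (k-2))) * hhalf +
          (-(av k 0 * bv k 0)) * R
      · -- case A' : m = 0, k = 1
        have hz : ∀ x ∈ (Finset.univ : Finset (Fin (2*k+1))),
            x ∉ ({⟨2*0, by omega⟩, ⟨2*1, by omega⟩} : Finset (Fin (2*k+1))) →
            pderiv x (FF k 0 (k+1)) * toda2 k x j = 0 := by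
          intro x _ hx
          have := x.isLt
          simp only [Finset.mem_insert, Finset.mem_singleton, Fin.ext_iff, Fin.val_mk] at hx
          push_neg at hx
          rw [toda2_zero k x j (by omega) (by omega) (by omega) (by omega), mul_zero]
        rw [← Finset.sum_subset (Finset.subset_univ _) hz,
          Finset.sum_pair (by simp only [ne_eq, Fin.ext_iff, Fin.val_mk]; omega),
          pd_even k 0 (by omega) (k+1) 0 (by omega),
          pd_even k 1 (by omega) (k+1) 0 (by omega),
          toda2_E1 k _ j (by simp only [Fin.val_mk]; omega),
          toda2_E2 k _ j (by simp only [Fin.val_mk]; omega),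
          if_pos (by omega), if_pos (by omega)]
        simp only [Fin.val_mk, Nat.sub_zero, hj]
        rw [(by omega : 0+(k+1)-1-1 = 0), (by omega : 0+(k+1)-1 = 1),
          show (0+1:ℕ) = 1 from rfl,
          show tvar k (2*0+1) = bv k 0 from rfl, show tvar k (2*0) = av k 0 from rfl,
          show tvar k (2*1) = av k 1 from rfl]
        simp only [FF_zero, FF_one]
        ring
    · -- odd, m = m'+1
      obtain ⟨m', rfl⟩ : ∃ m', m = m'+1 := ⟨m-1, by omega⟩
      have hj : j.val = 2*m'+3 := by omega
      have R2 := FF_back k m' 0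
      rw [(by omega : 0+m'+1 = m'+1), (by omega : 0+m' = m')] at R2
      by_cases hC : m' + 3 ≤ k
      · -- case C' : interior
        have hz : ∀ x ∈ (Finset.univ : Finset (Fin (2*k+1))),
            x ∉ ({⟨2*m'+1, by omega⟩, ⟨2*(m'+1), by omega⟩, ⟨2*(m'+2), by omega⟩,
              ⟨2*(m'+2)+1, by omega⟩} : Finset (Fin (2*k+1))) →
            pderiv x (FF k 0 (k+1)) * toda2 k x j = 0 := by
          intro x _ hx
          have := x.isLt
          simp only [Finset.mem_insert, Finset.mem_singleton, Fin.ext_iff, Fin.val_mk] at hx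
          push_neg at hx
          rw [toda2_zero k x j (by omega) (by omega) (by omega) (by omega), mul_zero]
        have R3 := FF_front k (m'+2) (k-m'-3)
        rw [(by omega : k-m'-3+2 = k-m'-1), (by omega : k-m'-3+1 = k-m'-2),
          show m'+2+1 = m'+3 from rfl, show m'+2+2 = m'+4 from rfl] at R3
        rw [← Finset.sum_subset (Finset.subset_univ _) hz,
          Finset.sum_insert (by simp only [Finset.mem_insert, Finset.mem_singleton,
            Fin.ext_iff, Fin.val_mk]; omega),
          Finset.sum_insert (by simp only [Finset.mem_insert, Finset.mem_singleton,
            Fin.ext_iff, Fin.val_mk]; omega),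
          Finset.sum_pair (by simp only [ne_eq, Fin.ext_iff, Fin.val_mk]; omega),
          pd_odd k m' (by omega) (k+1) 0 (by omega),
          pd_even k (m'+1) (by omega) (k+1) 0 (by omega),
          pd_even k (m'+2) (by omega) (k+1) 0 (by omega),
          pd_odd k (m'+2) (by omega) (k+1) 0 (by omega),
          toda2_E4 k _ j (by simp only [Fin.val_mk]; omega)
            (by simp only [Fin.val_mk, Nat.even_iff]; omega),
          toda2_E1 k _ j (by simp only [Fin.val_mk]; omega),
          toda2_E2 k _ j (by simp only [Fin.val_mk]; omega),
          toda2_E6 k _ j (by simp only [Fin.val_mk]; omega)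
            (by simp only [Nat.even_iff]; omega),
          if_pos (by omega), if_pos (by omega), if_pos (by omega), if_pos (by omega)]
        simp only [Fin.val_mk, Nat.sub_zero, hj]
        rw [(by omega : 0+(k+1)-m'-2 = k-m'-1), (by omega : 0+(k+1)-(m'+1)-1 = k-m'-1),
          (by omega : 0+(k+1)-(m'+2)-1 = k-m'-2), (by omega : 0+(k+1)-(m'+2)-2 = k-m'-3),
          show m'+1+1 = m'+2 from rfl, show m'+2+1 = m'+3 from rfl,
          show m'+2+2 = m'+4 from rfl,
          show (2*m'+3:ℕ) = 2*(m'+1)+1 from by ring,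
          show tvar k (2*m'+1) = bv k m' from rfl,
          show tvar k (2*(m'+1)+1) = bv k (m'+1) from rfl,
          show tvar k (2*(m'+1)) = av k (m'+1) from rfl,
          show tvar k (2*(m'+2)) = av k (m'+2) from rfl,
          show tvar k (2*(m'+2)+1) = bv k (m'+2) from rfl]
        linear_combination
          (-(bv k m'^2 * bv k (m'+1) * FF k 0 m' * FF k (m'+2) (k-m'-1))) * hneg +
          (-(bv k (m'+2)^2 * bv k (m'+1) * FF k 0 (m'+2) * FF k (m'+4) (k-m'-3))) * hhalf +
          (bv k (m'+1) * FF k (m'+2) (k-m'-1)) * R2 +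
          (-(bv k (m'+1) * FF k 0 (m'+2))) * R3
      · -- case B' : m'+2 = k
        have hB : m'+2 = k := by omega
        have hz : ∀ x ∈ (Finset.univ : Finset (Fin (2*k+1))),
            x ∉ ({⟨2*m'+1, by omega⟩, ⟨2*(m'+1), by omega⟩, ⟨2*(m'+2), by omega⟩} :
              Finset (Fin (2*k+1))) →
            pderiv x (FF k 0 (k+1)) * toda2 k x j = 0 := by
          intro x _ hx
          have := x.isLt
          simp only [Finset.mem_insert, Finset.mem_singleton, Fin.ext_iff, Fin.val_mk] at hx
          push_neg at hx
          rw [toda2_zero k x j (by omega) (by omega) (by omega) (by omega), mul_zero]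
        rw [← Finset.sum_subset (Finset.subset_univ _) hz,
          Finset.sum_insert (by simp only [Finset.mem_insert, Finset.mem_singleton,
            Fin.ext_iff, Fin.val_mk]; omega),
          Finset.sum_pair (by simp only [ne_eq, Fin.ext_iff, Fin.val_mk]; omega),
          pd_odd k m' (by omega) (k+1) 0 (by omega),
          pd_even k (m'+1) (by omega) (k+1) 0 (by omega),
          pd_even k (m'+2) (by omega) (k+1) 0 (by omega),
          toda2_E4 k _ j (by simp only [Fin.val_mk]; omega)
            (by simp only [Fin.val_mk, Nat.even_iff]; omega),
          toda2_E1 k _ j (by simp only [Fin.val_mk]; omega),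
          toda2_E2 k _ j (by simp only [Fin.val_mk]; omega),
          if_pos (by omega), if_pos (by omega), if_pos (by omega)]
        simp only [Fin.val_mk, Nat.sub_zero, hj]
        rw [(by omega : 0+(k+1)-m'-2 = 1), (by omega : 0+(k+1)-(m'+1)-1 = 1),
          (by omega : 0+(k+1)-(m'+2)-1 = 0),
          show m'+1+1 = m'+2 from rfl,
          show (2*m'+3:ℕ) = 2*(m'+1)+1 from by ring,
          show tvar k (2*m'+1) = bv k m' from rfl,
          show tvar k (2*(m'+1)+1) = bv k (m'+1) from rfl,
          show tvar k (2*(m'+1)) = av k (m'+1) from rfl,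
          show tvar k (2*(m'+2)) = av k (m'+2) from rfl]
        simp only [FF_zero, FF_one]
        linear_combination (-(bv k m'^2 * bv k (m'+1) * FF k 0 m' * av k (m'+2))) * hneg +
          (av k (m'+2) * bv k (m'+1)) * R2
end
end

section
/- For the open Toda lattice of dimension 2k+1 (k ≥ 1), let D_λ := det(ι(v) + λ·I_{k+1}), a polynomial in v₀, …, v_{2k} and λ. Then for every λ ∈ ℂ the function D_λ is a Casimir polynomial for the bracket λΠ₁ + Π₂: for every j ∈ {0, …, 2k}, the identity Σ_{i=0}^{2k} (∂D_λ/∂v_i) · (λΠ₁(v) + Π₂(v))_{ij} = 0 holds identically as a polynomial in v₀, …, v_{2k} and λ. -/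
open Matrix MvPolynomial

noncomputable section

/-- The first Toda bracket matrix `Π₁`. -/
def toda1 (k : ℕ) : Matrix (Fin (2 * k + 1)) (Fin (2 * k + 1))
    (MvPolynomial (Fin (2 * k + 1)) ℂ) :=
  Matrix.of fun i j =>
    if j.val = i.val + 1 then (if Even i.val then -X j else -X i)
    else if i.val = j.val + 1 then (if Even j.val then X i else X j)
    else 0

/-!
Expanding along the last row, `det(ι(v) + λ)` is the continuant `Q (k + 2)` of the recurrence
`Q (n + 2) = (λ + v_{2n}) Q (n + 1) - v_{2n-1}² Q n` with `Q 0 = 0`, `Q 1 = 1`. For fixed `j`,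
`p ↦ ∑ i, ∂ᵢ p · (λΠ₁ + Π₂)ᵢⱼ` is a derivation `W`, and on the coefficients `λ + v_{2n}` and
`v_{2n-1}²` of the recurrence it is nonzero only for the few `n` next to `j / 2`. Applying `W` to
the recurrence, and using the recurrence itself once more, `W Q` vanishes at two consecutive
indices just past those `n`; from there on `W` kills all coefficients, so the zeros propagate to
`Q (k + 2)`.
-/

section Continuant

variable {R : Type*} [CommRing R] (a c : ℕ → R)

/-- `continuant a c (n + 1)` is the determinant of the `n × n` tridiagonal matrix with diagonal
`a 0, …, a (n - 1)`, where `c i` is the product of the two off-diagonal entries joining rows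
`i - 1` and `i` (see `det_symmTridiag`); the extra initial value `continuant a c 0 = 0` lets the
three-term recurrence hold from the start. -/
def continuant : ℕ → R
  | 0 => 0
  | 1 => 1
  | n + 2 => a n * continuant (n + 1) - c n * continuant n

@[simp] theorem continuant_zero : continuant a c 0 = 0 := rfl

@[simp] theorem continuant_one : continuant a c 1 = 1 := rfl

theorem continuant_succ_succ (n : ℕ) :
    continuant a c (n + 2) = a n * continuant a c (n + 1) - c n * continuant a c n := rfl

theorem continuant_mem {T : Type*} [SetLike T R] [SubringClass T R] (S : T) {n : ℕ}
    (h : ∀ i, i + 2 ≤ n → a i ∈ S ∧ c i ∈ S) : continuant a c n ∈ S := by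
  induction n using Nat.strong_induction_on with
  | _ n ih =>
    match n, h with
    | 0, _ => exact zero_mem S
    | 1, _ => exact one_mem S
    | n + 2, h =>
      obtain ⟨ha, hc⟩ := h n le_rfl
      exact sub_mem (mul_mem ha (ih _ (by omega) fun i _ => h i (by omega)))
        (mul_mem hc (ih _ (by omega) fun i _ => h i (by omega)))

/-- The entry `b i` joins rows `i - 1` and `i`; `b 0` is not used. -/
def symmTridiag (b : ℕ → R) (n : ℕ) : Matrix (Fin n) (Fin n) R :=
  Matrix.of fun i j =>
    if (i : ℕ) = j then a i
    else if (j : ℕ) = i + 1 then b j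
    else if (i : ℕ) = j + 1 then b i
    else 0

theorem det_symmTridiag_succ_succ (b : ℕ → R) (n : ℕ) :
    (symmTridiag a b (n + 2)).det =
      a (n + 1) * (symmTridiag a b (n + 1)).det - b (n + 1) ^ 2 * (symmTridiag a b n).det := by
  set M := symmTridiag a b (n + 2)
  have hminor : M.submatrix Fin.castSucc Fin.castSucc = symmTridiag a b (n + 1) := by
    ext i j
    simp [M, symmTridiag]
  have hcorner : (M.submatrix Fin.castSucc (Fin.last n).castSucc.succAbove).submatrix
      Fin.castSucc Fin.castSucc = symmTridiag a b n := by
    ext i j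
    simp [M, symmTridiag, Fin.succAbove_of_castSucc_lt, Fin.castSucc_lt_last]
  have hcol : (M.submatrix Fin.castSucc (Fin.last n).castSucc.succAbove).det =
      b (n + 1) * (symmTridiag a b n).det := by
    rw [det_succ_column _ (Fin.last n), Fin.sum_univ_castSucc, Finset.sum_eq_zero,
      Fin.succAbove_last, hcorner]
    · simp [M, symmTridiag]
    · intro i _
      have : M (Fin.castSucc i.castSucc) (Fin.last (n + 1)) = 0 := by
        simp only [M, symmTridiag, of_apply, Fin.val_castSucc, Fin.val_last]
        grind
      simp [this]
  rw [det_succ_row M (Fin.last (n + 1)), Fin.sum_univ_castSucc, Fin.sum_univ_castSucc,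
    Finset.sum_eq_zero, Fin.succAbove_last, hminor, hcol]
  · simp [M, symmTridiag, show n ≠ n + 1 + 1 by omega]
    ring
  · intro j _
    have : M (Fin.last (n + 1)) j.castSucc.castSucc = 0 := by
      simp only [M, symmTridiag, of_apply, Fin.val_castSucc, Fin.val_last]
      grind
    simp [this]

theorem det_symmTridiag (b : ℕ → R) (n : ℕ) :
    (symmTridiag a b n).det = continuant a (fun i => b i ^ 2) (n + 1) := by
  induction n using Nat.strong_induction_on with
  | _ n ih =>
    match n with
    | 0 => simp
    | 1 => simp [symmTridiag, continuant_succ_succ]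
    | n + 2 =>
      rw [det_symmTridiag_succ_succ, ih n (by omega), ih (n + 1) (by omega)]
      rfl

end Continuant

namespace Derivation

variable {S R : Type*} [CommSemiring S] [CommRing R] [Algebra S R] (W : Derivation S R R)
  {a c : ℕ → R}

theorem map_continuant_succ_succ (n : ℕ) :
    W (continuant a c (n + 2)) =
      a n * W (continuant a c (n + 1)) - c n * W (continuant a c n) +
        (W (a n) * continuant a c (n + 1) - W (c n) * continuant a c n) := by
  rw [continuant_succ_succ, map_sub, leibniz, leibniz]
  simp only [smul_eq_mul]
  ring

theorem map_continuant_eq_zero {n N : ℕ} (h₀ : W (continuant a c n) = 0)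
    (h₁ : W (continuant a c (n + 1)) = 0)
    (h : ∀ i, n ≤ i → i + 2 ≤ N → W (a i) = 0 ∧ W (c i) = 0) (hN : n ≤ N) :
    W (continuant a c N) = 0 := by
  induction N using Nat.strong_induction_on with
  | _ N ih =>
    rcases Nat.lt_or_ge N (n + 2) with hlt | hge
    · obtain rfl | rfl : N = n ∨ N = n + 1 := by omega
      exacts [h₀, h₁]
    · obtain ⟨N, rfl⟩ : ∃ N', N = N' + 2 := ⟨N - 2, by omega⟩
      obtain ⟨ha, hc⟩ := h N (by omega) le_rfl
      rw [map_continuant_succ_succ, ha, hc,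
        ih (N + 1) (by omega) (fun i hi _ => h i hi (by omega)) (by omega),
        ih N (by omega) (fun i hi _ => h i hi (by omega)) (by omega)]
      ring

/-- With `a i = λ + v_{2i}` and `c i = v_{2i-1}²`, the hypotheses say that `W` is the derivation
`∑ i, (λΠ₁ + Π₂)_{i,2m} ∂ᵢ`. -/
theorem map_continuant_eq_zero_of_diagonal_flow {m : ℕ}
    (ha : ∀ i, W (a i) = if i + 1 = m then -2 * c m else if i = m + 1 then 2 * c (m + 1) else 0)
    (hc : ∀ i, W (c i) =
      if i = m then -2 * (a m * c m) else if i = m + 1 then 2 * (a m * c (m + 1)) else 0)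
    {N : ℕ} (hN : m + 2 ≤ N) : W (continuant a c N) = 0 := by
  have hlow : ∀ n ≤ m, W (continuant a c n) = 0 := fun n hn =>
    W.map_continuant_eq_zero (n := 0) (by simp) (by simp)
      (fun i _ hi => ⟨by rw [ha, if_neg (by omega), if_neg (by omega)],
        by rw [hc, if_neg (by omega), if_neg (by omega)]⟩) (Nat.zero_le n)
  have h₁ : W (continuant a c (m + 1)) = -2 * c m * continuant a c m := by
    cases m with
    | zero => simp
    | succ m =>
      rw [map_continuant_succ_succ, hlow (m + 1) le_rfl, hlow m (by omega), ha, hc,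
        if_pos rfl, if_neg (by omega), if_neg (by omega)]
      ring
  have h₂ : W (continuant a c (m + 2)) = 0 := by
    rw [map_continuant_succ_succ, h₁, hlow m le_rfl, ha, hc, if_neg (by omega),
      if_neg (by omega), if_pos rfl]
    ring
  have h₃ : W (continuant a c (m + 3)) = 0 := by
    rw [map_continuant_succ_succ, h₂, h₁, ha, hc, if_neg (by omega), if_pos rfl,
      if_neg (by omega), if_pos rfl, continuant_succ_succ a c m]
    ring
  exact W.map_continuant_eq_zero h₂ h₃ (fun i hi _ => ⟨by rw [ha, if_neg (by omega),
    if_neg (by omega)], by rw [hc, if_neg (by omega), if_neg (by omega)]⟩) hN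

/-- As above, for the column `2m + 1`, with `s = v_{2m+1}`. -/
theorem map_continuant_eq_zero_of_offDiagonal_flow {m : ℕ} (s : R)
    (ha : ∀ i, W (a i) = if i = m then -(s * a m) else if i = m + 1 then s * a (m + 1) else 0)
    (hc : ∀ i, W (c i) = if i = m then -(s * c m) else if i = m + 2 then s * c (m + 2) else 0)
    {N : ℕ} (hN : m + 3 ≤ N) : W (continuant a c N) = 0 := by
  have hlow : ∀ n ≤ m + 1, W (continuant a c n) = 0 := fun n hn =>
    W.map_continuant_eq_zero (n := 0) (by simp) (by simp)
      (fun i _ hi => ⟨by rw [ha, if_neg (by omega), if_neg (by omega)],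
        by rw [hc, if_neg (by omega), if_neg (by omega)]⟩) (Nat.zero_le n)
  have h₂ : W (continuant a c (m + 2)) = -(s * continuant a c (m + 2)) := by
    rw [map_continuant_succ_succ, hlow (m + 1) le_rfl, hlow m (by omega), ha, hc, if_pos rfl,
      if_pos rfl, continuant_succ_succ a c m]
    ring
  have h₃ : W (continuant a c (m + 3)) = 0 := by
    rw [map_continuant_succ_succ, h₂, hlow (m + 1) le_rfl, ha, hc, if_neg (by omega),
      if_pos rfl, if_neg (by omega), if_neg (by omega)]
    ring
  have h₄ : W (continuant a c (m + 4)) = 0 := by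
    rw [map_continuant_succ_succ, h₃, h₂, ha, hc, if_neg (by omega), if_neg (by omega),
      if_neg (by omega), if_pos rfl]
    ring
  exact W.map_continuant_eq_zero h₃ h₄ (fun i hi _ => ⟨by rw [ha, if_neg (by omega),
    if_neg (by omega)], by rw [hc, if_neg (by omega), if_neg (by omega)]⟩) hN

end Derivation

theorem MvPolynomial.mkDerivation_eq_sum_pderiv {R σ : Type*} [CommSemiring R]
    (f : σ → MvPolynomial σ R) {s : Finset σ} {p : MvPolynomial σ R}
    (hp : p ∈ supported R (s : Set σ)) : mkDerivation R f p = ∑ i ∈ s, pderiv i p * f i := by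
  classical
  have hsum : ∀ q, (∑ i ∈ s, f i • pderiv i) q = ∑ i ∈ s, pderiv i q * f i := fun q => by
    rw [← Derivation.coeFnAddMonoidHom_apply, map_sum, Finset.sum_apply]
    simp [Derivation.coeFnAddMonoidHom_apply, mul_comm]
  rw [← hsum]
  exact derivation_eqOn_supported
    (fun i (hi : i ∈ s) => by simp [hsum, pderiv_X, Pi.single_apply, hi]) hp

theorem two_mul_C_half {σ : Type*} : (2 : MvPolynomial σ ℂ) * C (1 / 2) = 1 := by
  rw [← map_ofNat C 2, ← C_mul]
  norm_num

def todaDiag (lam : ℂ) (n : ℕ) : MvPolynomial ℕ ℂ := C lam + X (2 * n)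

/-- `v_{2n-1}`, the entry of `ι(v)` joining rows `n - 1` and `n`, and `0` for `n = 0`. -/
def todaOffDiag : ℕ → MvPolynomial ℕ ℂ
  | 0 => 0
  | n + 1 => X (2 * n + 1)

/-- The entries of `λΠ₁ + Π₂` with indices in `ℕ`, not cut off at `2k`. -/
def todaPencil (lam : ℂ) (i j : ℕ) : MvPolynomial ℕ ℂ :=
  if j = i + 1 then (if Even i then -(X j * (C lam + X i)) else -(X i * (C lam + X j)))
  else if i = j + 1 then (if Even j then X i * (C lam + X j) else X j * (C lam + X i))
  else if j = i + 2 then (if Even i then -2 * X (i + 1) ^ 2 else C (-(1 / 2)) * (X i * X j))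
  else if i = j + 2 then (if Even j then 2 * X (j + 1) ^ 2 else C (1 / 2) * (X i * X j))
  else 0

theorem rename_todaPencil (k : ℕ) (lam : ℂ) (i j : Fin (2 * k + 1)) :
    rename Fin.val (C lam * toda1 k i j + toda2 k i j) = todaPencil lam i j := by
  simp only [toda1, toda2, todaPencil, of_apply]
  split_ifs <;> simp [map_ofNat] <;> ring

theorem rename_det_iotaMat_add_smul_one (k : ℕ) (lam : ℂ) :
    rename Fin.val (iotaMat k + (C lam : MvPolynomial (Fin (2 * k + 1)) ℂ) •
        (1 : Matrix (Fin (k + 1)) (Fin (k + 1)) (MvPolynomial (Fin (2 * k + 1)) ℂ))).det =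
      continuant (todaDiag lam) (fun i => todaOffDiag i ^ 2) (k + 2) := by
  rw [AlgHom.map_det, AlgHom.mapMatrix_apply, ← det_symmTridiag]
  congr 1
  refine Matrix.ext fun i j => ?_
  simp only [map_apply, Matrix.add_apply, Matrix.smul_apply, one_apply, iotaMat, symmTridiag,
    of_apply, Fin.ext_iff, todaDiag, smul_eq_mul]
  split_ifs <;> simp_all [todaOffDiag, add_comm]

theorem continuant_todaDiag_mem_supported (lam : ℂ) (k : ℕ) :
    continuant (todaDiag lam) (fun i => todaOffDiag i ^ 2) (k + 2) ∈
      supported ℂ (Finset.range (2 * k + 1) : Set ℕ) := by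
  refine continuant_mem _ _ _ fun i hi => ⟨?_, pow_mem ?_ 2⟩
  · exact add_mem (Subalgebra.algebraMap_mem _ lam) (X_mem_supported.2 (by simp; omega))
  · rcases i with _ | i
    · exact zero_mem _
    · exact X_mem_supported.2 (by simp; omega)

def todaFlow (lam : ℂ) (j : ℕ) : Derivation ℂ (MvPolynomial ℕ ℂ) (MvPolynomial ℕ ℂ) :=
  mkDerivation ℂ fun i => todaPencil lam i j

theorem todaFlow_X (lam : ℂ) (i j : ℕ) : todaFlow lam j (X i) = todaPencil lam i j :=
  mkDerivation_X ℂ _ i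

theorem todaFlow_even_todaDiag (lam : ℂ) (m i : ℕ) :
    todaFlow lam (2 * m) (todaDiag lam i) =
      if i + 1 = m then -2 * todaOffDiag m ^ 2
      else if i = m + 1 then 2 * todaOffDiag (m + 1) ^ 2 else 0 := by
  rw [todaDiag, map_add, derivation_C, zero_add, todaFlow_X, todaPencil]
  simp only [even_two_mul, if_true]
  split_ifs <;> first | omega | (subst_vars; rfl)

theorem todaFlow_even_todaOffDiag_sq (lam : ℂ) (m i : ℕ) :
    todaFlow lam (2 * m) (todaOffDiag i ^ 2) =
      if i = m then -2 * (todaDiag lam m * todaOffDiag m ^ 2)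
      else if i = m + 1 then 2 * (todaDiag lam m * todaOffDiag (m + 1) ^ 2) else 0 := by
  rcases i with _ | i
  · rcases m with _ | m <;> simp [todaOffDiag]
  rw [todaOffDiag, sq, Derivation.leibniz, smul_eq_mul, todaFlow_X, todaPencil]
  simp only [even_two_mul, Nat.not_even_bit1, if_true, if_false, Nat.add_right_cancel_iff]
  split_ifs <;> first | omega | (subst_vars; simp only [todaOffDiag, todaDiag]; ring) | simp

theorem todaFlow_odd_todaDiag (lam : ℂ) (m i : ℕ) :
    todaFlow lam (2 * m + 1) (todaDiag lam i) =
      if i = m then -(X (2 * m + 1) * todaDiag lam m)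
      else if i = m + 1 then X (2 * m + 1) * todaDiag lam (m + 1) else 0 := by
  rw [todaDiag, map_add, derivation_C, zero_add, todaFlow_X, todaPencil]
  simp only [even_two_mul, Nat.not_even_bit1, if_true, if_false]
  split_ifs <;> first | omega | (subst_vars; rfl)

theorem todaFlow_odd_todaOffDiag_sq (lam : ℂ) (m i : ℕ) :
    todaFlow lam (2 * m + 1) (todaOffDiag i ^ 2) =
      if i = m then -(X (2 * m + 1) * todaOffDiag m ^ 2)
      else if i = m + 2 then X (2 * m + 1) * todaOffDiag (m + 2) ^ 2 else 0 := by
  rcases i with _ | i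
  · rcases m with _ | m <;> simp [todaOffDiag]
  rw [todaOffDiag, sq, Derivation.leibniz, smul_eq_mul, todaFlow_X, todaPencil]
  simp only [Nat.not_even_bit1, if_false]
  split_ifs <;>
    first
    | omega
    | (subst_vars
       simp only [todaOffDiag, C_neg]
       linear_combination (-(X (2 * i + 1) ^ 2 * X (2 * (i + 1) + 1))) * two_mul_C_half)
    | (obtain rfl : i = m + 1 := by omega
       simp only [todaOffDiag]
       linear_combination (X (2 * (m + 1) + 1) ^ 2 * X (2 * m + 1)) * two_mul_C_half)
    | ring

theorem todaFlow_continuant_eq_zero (lam : ℂ) {k j : ℕ} (hj : j ≤ 2 * k) :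
    todaFlow lam j (continuant (todaDiag lam) (fun i => todaOffDiag i ^ 2) (k + 2)) = 0 := by
  obtain ⟨m, rfl | rfl⟩ := Nat.even_or_odd' j
  · exact Derivation.map_continuant_eq_zero_of_diagonal_flow (todaFlow lam (2 * m))
      (a := todaDiag lam) (c := fun i => todaOffDiag i ^ 2)
      (todaFlow_even_todaDiag lam m) (todaFlow_even_todaOffDiag_sq lam m) (by omega)
  · exact Derivation.map_continuant_eq_zero_of_offDiagonal_flow (todaFlow lam (2 * m + 1))
      (a := todaDiag lam) (c := fun i => todaOffDiag i ^ 2) (X (2 * m + 1))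
      (todaFlow_odd_todaDiag lam m) (todaFlow_odd_todaOffDiag_sq lam m) (by omega)

theorem toda_char_det_is_casimir_general (k : ℕ) :
    ∀ (lam : ℂ) (j : Fin (2 * k + 1)),
      ∑ i : Fin (2 * k + 1),
        pderiv i (iotaMat k + (C lam : MvPolynomial (Fin (2 * k + 1)) ℂ)
            • (1 : Matrix (Fin (k + 1)) (Fin (k + 1))
              (MvPolynomial (Fin (2 * k + 1)) ℂ))).det
          * (C lam * toda1 k i j + toda2 k i j) = 0 := by
  intro lam j
  apply rename_injective _ Fin.val_injective
  simp only [map_sum, map_mul, map_zero, ← pderiv_rename Fin.val_injective,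
    rename_det_iotaMat_add_smul_one, rename_todaPencil]
  rw [Fin.sum_univ_eq_sum_range (fun i => pderiv i _ * todaPencil lam i j),
    ← mkDerivation_eq_sum_pderiv _ (continuant_todaDiag_mem_supported lam k)]
  exact todaFlow_continuant_eq_zero lam (by omega)

/-- for every `λ`, `det(ι(v) + λ·I)` is a Casimir polynomial for
the bracket `λΠ₁ + Π₂`. -/
theorem toda_char_det_is_casimir (k : ℕ) (hk : 1 ≤ k) :
    ∀ (lam : ℂ) (j : Fin (2 * k + 1)),
      ∑ i : Fin (2 * k + 1),
        pderiv i (iotaMat k + (C lam : MvPolynomial (Fin (2 * k + 1)) ℂ)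
            • (1 : Matrix (Fin (k + 1)) (Fin (k + 1))
              (MvPolynomial (Fin (2 * k + 1)) ℂ))).det
          * (C lam * toda1 k i j + toda2 k i j) = 0 :=
  toda_char_det_is_casimir_general k
end
end

section
/- For the open Toda lattice of dimension 2k+1 (k ≥ 1) and any point v ∈ ℂ^{2k+1}, the rank of the antisymmetric (2k+1)×(2k+1) matrix Π₁(v) equals 2k − 2d, where d is the number of indices l ∈ {0, …, k−1} with v_{2l+1} = 0. -/
open Matrix

noncomputable section

/-- The first open Toda bracket matrix `Π₁` evaluated at the point `v`. -/
def toda1C (k : ℕ) (v : Fin (2 * k + 1) → ℂ) :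
    Matrix (Fin (2 * k + 1)) (Fin (2 * k + 1)) ℂ :=
  Matrix.of fun i j =>
    if j.val = i.val + 1 then (if Even i.val then -v j else -v i)
    else if i.val = j.val + 1 then (if Even j.val then v i else v j)
    else 0

/-!
Row `2l+1` of `Π₁(v) x` is `v_{2l+1} (x_{2l} - x_{2l+2})`, and the even rows are the successive
differences of `w_l = v_{2l+1} x_{2l+1}` (with `w_{-1} = w_k = 0`), so they all vanish iff every
`w_l` does. Hence `x ∈ ker Π₁(v)` iff `x_{2l+1} = 0` and `x_{2l} = x_{2l+2}` for every `l` with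
`v_{2l+1} ≠ 0`: the kernel of `Π₁(v)` is that of the surjection
`x ↦ (x_{2l+1}, x_{2l+2} - x_{2l})_{v_{2l+1} ≠ 0}`, and the rank is twice the number of such `l`.
-/

theorem Matrix.mulVec_apply_of_tridiagonal {R : Type*} [NonUnitalNonAssocSemiring R] {n : ℕ}
    (M : Matrix (Fin n) (Fin n) R)
    (hM : ∀ i j : Fin n, j.val ≠ i.val + 1 → i.val ≠ j.val + 1 → M i j = 0)
    (x : Fin n → R) (i : Fin n) :
    (M *ᵥ x) i = (if h : i.val + 1 < n then M i ⟨i + 1, h⟩ * x ⟨i + 1, h⟩ else 0)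
      + (if h : 0 < i.val then M i ⟨i - 1, by omega⟩ * x ⟨i - 1, by omega⟩ else 0) := by
  have hzero : ∀ j : Fin n, j.val ≠ i.val + 1 → j.val + 1 ≠ i.val → M i j * x j = 0 :=
    fun j h₁ h₂ => by rw [hM i j h₁ (Ne.symm h₂), zero_mul]
  simp only [mulVec, dotProduct]
  split_ifs with h₁ h₀ h₀
  · exact Fintype.sum_eq_add _ _ (by simp [Fin.ext_iff]; omega) fun j hj =>
      hzero j (Fin.val_ne_of_ne hj.1) (by have : j.val ≠ i - 1 := Fin.val_ne_of_ne hj.2; omega)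
  · rw [add_zero]
    exact Fintype.sum_eq_single _ fun j hj => hzero j (Fin.val_ne_of_ne hj) (by omega)
  · rw [zero_add]
    exact Fintype.sum_eq_single _ fun j hj =>
      hzero j (by omega) (by have : j.val ≠ i - 1 := Fin.val_ne_of_ne hj; omega)
  · rw [add_zero]
    exact Fintype.sum_eq_zero _ fun j => hzero j (by omega) (by omega)

theorem LinearMap.finrank_range_eq_of_ker_eq {R V W U : Type*} [Ring R] [AddCommGroup V]
    [Module R V] [AddCommGroup W] [Module R W] [AddCommGroup U] [Module R U]
    {f : V →ₗ[R] W} {g : V →ₗ[R] U} (h : LinearMap.ker f = LinearMap.ker g) :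
    Module.finrank R (LinearMap.range f) = Module.finrank R (LinearMap.range g) :=
  (f.quotKerEquivRange.symm ≪≫ₗ Submodule.quotEquivOfEq _ _ h ≪≫ₗ g.quotKerEquivRange).finrank_eq

theorem Fin.forall_two_mul_add_one_iff {k : ℕ} {P : Fin (2 * k + 1) → Prop} :
    (∀ i, P i) ↔ P ⟨0, by omega⟩ ∧ (∀ l (hl : l < k), P ⟨2 * l + 1, by omega⟩) ∧
      ∀ l (hl : l < k), P ⟨2 * l + 2, by omega⟩ := by
  refine ⟨fun h => ⟨h _, fun _ _ => h _, fun _ _ => h _⟩, fun ⟨h₀, hodd, heven⟩ ⟨i, hi⟩ => ?_⟩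
  obtain ⟨l, rfl | rfl⟩ := Nat.even_or_odd' i
  · rcases l with _ | l
    · exact h₀
    · exact heven l (by omega)
  · exact hodd l (by omega)

theorem Nat.forall_le_eq_iff {α : Type*} {w : ℕ → α} {c : α} {k : ℕ} :
    (∀ l ≤ k, w l = c) ↔ w 0 = c ∧ ∀ l < k, w l = w (l + 1) := by
  refine ⟨fun h => ⟨h 0 (Nat.zero_le k), fun l hl => (h l hl.le).trans (h (l + 1) hl).symm⟩,
    fun ⟨h₀, hstep⟩ l => ?_⟩
  induction l with
  | zero => exact fun _ => h₀
  | succ l ih => exact fun hl => (hstep l hl).symm.trans (ih (Nat.le_of_succ_le hl))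

section
variable {k : ℕ} (v x : Fin (2 * k + 1) → ℂ)

def toda1OddProduct (l : ℕ) : ℂ :=
  if h : l < k then v ⟨2 * l + 1, by omega⟩ * x ⟨2 * l + 1, by omega⟩ else 0

theorem toda1C_apply_of_not_adjacent (i j : Fin (2 * k + 1)) (h₁ : j.val ≠ i.val + 1)
    (h₂ : i.val ≠ j.val + 1) : toda1C k v i j = 0 := by
  simp [toda1C, h₁, h₂]

theorem toda1C_mulVec_zero : (toda1C k v *ᵥ x) ⟨0, by omega⟩ = -toda1OddProduct v x 0 := by
  rw [mulVec_apply_of_tridiagonal _ (toda1C_apply_of_not_adjacent v)]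
  by_cases hk : 0 < k <;> simp [toda1OddProduct, toda1C, hk]

theorem toda1C_mulVec_odd (l : ℕ) (hl : l < k) :
    (toda1C k v *ᵥ x) ⟨2 * l + 1, by omega⟩
      = v ⟨2 * l + 1, by omega⟩ * (x ⟨2 * l, by omega⟩ - x ⟨2 * l + 2, by omega⟩) := by
  rw [mulVec_apply_of_tridiagonal _ (toda1C_apply_of_not_adjacent v)]
  have hodd : ¬ Even (2 * l + 1) := by simp
  simp [toda1C, hodd, show 2 * l + 1 + 1 < 2 * k + 1 by omega, show 2 * l ≠ 2 * l + 1 + 1 by omega]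
  ring

theorem toda1C_mulVec_even_succ (l : ℕ) (hl : l < k) :
    (toda1C k v *ᵥ x) ⟨2 * l + 2, by omega⟩
      = toda1OddProduct v x l - toda1OddProduct v x (l + 1) := by
  rw [mulVec_apply_of_tridiagonal _ (toda1C_apply_of_not_adjacent v)]
  have hodd : ¬ Even (2 * l + 1) := by simp
  by_cases hl' : l + 1 < k
  · simp [toda1C, toda1OddProduct, hodd, hl, hl', show 2 * l + 2 + 1 < 2 * k + 1 by omega,
      show Even (2 * l + 2) from ⟨l + 1, by ring⟩, mul_add]
    ring
  · simp [toda1C, toda1OddProduct, hodd, hl, hl', show ¬ 2 * l + 2 + 1 < 2 * k + 1 by omega]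

theorem forall_le_toda1OddProduct_eq_zero_iff :
    (∀ l ≤ k, toda1OddProduct v x l = 0) ↔
      ∀ l (hl : l < k), v ⟨2 * l + 1, by omega⟩ * x ⟨2 * l + 1, by omega⟩ = 0 := by
  refine ⟨fun h l hl => by simpa [toda1OddProduct, hl] using h l hl.le, fun h l hl => ?_⟩
  rcases hl.lt_or_eq with hl | rfl
  · simpa [toda1OddProduct, hl] using h l hl
  · simp [toda1OddProduct]

theorem toda1C_mulVec_eq_zero_iff :
    toda1C k v *ᵥ x = 0 ↔ ∀ l : Fin k, v ⟨2 * l + 1, by omega⟩ ≠ 0 →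
      x ⟨2 * l + 1, by omega⟩ = 0 ∧ x ⟨2 * l + 2, by omega⟩ = x ⟨2 * l, by omega⟩ := by
  have hrows : toda1C k v *ᵥ x = 0 ↔ (∀ l ≤ k, toda1OddProduct v x l = 0) ∧
      ∀ l (hl : l < k),
        v ⟨2 * l + 1, by omega⟩ * (x ⟨2 * l, by omega⟩ - x ⟨2 * l + 2, by omega⟩) = 0 := by
    rw [funext_iff, Fin.forall_two_mul_add_one_iff, Nat.forall_le_eq_iff]
    simp +contextual only [Pi.zero_apply, toda1C_mulVec_zero, toda1C_mulVec_odd,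
      toda1C_mulVec_even_succ, neg_eq_zero, sub_eq_zero]
    tauto
  rw [hrows, forall_le_toda1OddProduct_eq_zero_iff]
  simp only [Fin.forall_iff, ← forall_and, mul_eq_zero, sub_eq_zero]
  exact forall₂_congr fun l hl => by tauto

end

def toda1Coords (k : ℕ) : (Fin (2 * k + 1) → ℂ) →ₗ[ℂ] Fin k → ℂ × ℂ :=
  LinearMap.pi fun l => (LinearMap.proj ⟨2 * l + 1, by omega⟩).prod
    (LinearMap.proj ⟨2 * l + 2, by omega⟩ - LinearMap.proj ⟨2 * l, by omega⟩)

theorem toda1Coords_apply {k : ℕ} (x : Fin (2 * k + 1) → ℂ) (l : Fin k) :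
    toda1Coords k x l = (x ⟨2 * l + 1, by omega⟩, x ⟨2 * l + 2, by omega⟩ - x ⟨2 * l, by omega⟩) :=
  rfl

theorem toda1Coords_surjective (k : ℕ) : Function.Surjective (toda1Coords k) := by
  intro y
  let Y : ℕ → ℂ := fun j => if h : j < k then (y ⟨j, h⟩).2 else 0
  refine ⟨fun i => if h : i.val % 2 = 0 then ∑ j ∈ Finset.range (i / 2), Y j
    else (y ⟨i / 2, by omega⟩).1, funext fun l => ?_⟩
  have h₁ : (2 * l.val + 1) / 2 = l := by omega
  have h₂ : (2 * l.val + 2) / 2 = l + 1 := by omega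
  have h₃ : 2 * l.val / 2 = l := by omega
  simp [toda1Coords_apply, h₁, h₂, h₃, Finset.sum_range_succ, Y]

def toda1ActiveCoords {k : ℕ} (v : Fin (2 * k + 1) → ℂ) :
    (Fin (2 * k + 1) → ℂ) →ₗ[ℂ] {l : Fin k // v ⟨2 * l + 1, by omega⟩ ≠ 0} → ℂ × ℂ :=
  LinearMap.funLeft ℂ (ℂ × ℂ) Subtype.val ∘ₗ toda1Coords k

theorem toda1ActiveCoords_surjective {k : ℕ} (v : Fin (2 * k + 1) → ℂ) :
    Function.Surjective (toda1ActiveCoords v) :=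
  (LinearMap.funLeft_surjective_of_injective ℂ (ℂ × ℂ) _ Subtype.val_injective).comp
    (toda1Coords_surjective k)

theorem ker_toda1C_mulVecLin {k : ℕ} (v : Fin (2 * k + 1) → ℂ) :
    LinearMap.ker (toda1C k v).mulVecLin = LinearMap.ker (toda1ActiveCoords v) := by
  ext x
  rw [LinearMap.mem_ker, LinearMap.mem_ker, mulVecLin_apply, toda1C_mulVec_eq_zero_iff]
  simp [toda1ActiveCoords, funext_iff, toda1Coords_apply, Prod.ext_iff, sub_eq_zero]

theorem rank_toda1C {k : ℕ} (v : Fin (2 * k + 1) → ℂ) :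
    (toda1C k v).rank = 2 * Nat.card {l : Fin k // v ⟨2 * l + 1, by omega⟩ ≠ 0} := by
  rw [Matrix.rank, LinearMap.finrank_range_eq_of_ker_eq (ker_toda1C_mulVecLin v),
    LinearMap.range_eq_top.2 (toda1ActiveCoords_surjective v), finrank_top,
    Module.finrank_pi_fintype, Module.finrank_prod, Module.finrank_self, Finset.sum_const,
    Finset.card_univ, smul_eq_mul, mul_comm, Nat.card_eq_fintype_card]

/-- the rank of `Π₁(v)` is `2k - 2d`, where `d` is the number of
vanishing odd coordinates `v_{2l+1}`, `0 ≤ l ≤ k-1`. -/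
theorem toda1_rank (k : ℕ) (v : Fin (2 * k + 1) → ℂ) :
    (toda1C k v).rank
      = 2 * k - 2 * Nat.card
          {l : Fin k // v (⟨2 * l.val + 1, by have := l.isLt; omega⟩ : Fin (2 * k + 1)) = 0} := by
  have hcard : Nat.card {l : Fin k // v ⟨2 * l + 1, by omega⟩ = 0}
      + Nat.card {l : Fin k // v ⟨2 * l + 1, by omega⟩ ≠ 0} = k := by
    rw [← Nat.card_sum, Nat.card_congr (Equiv.sumCompl _), Nat.card_eq_fintype_card,
      Fintype.card_fin]
  rw [rank_toda1C]
  omega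
end
end

section
/- Let k ≥ 1 and consider the Kronecker pair K_{2k−1} on ℂ^{2k−1}. Suppose (β_i)_{i≥0} is a sequence of vectors in ℂ^{2k−1} such that ω₁(β₀, w) = 0 for all w ∈ ℂ^{2k−1}, and ω₂(β_i, w) = ω₁(β_{i+1}, w) for all w ∈ ℂ^{2k−1} and all i ≥ 0. Then every β_i lies in the k-dimensional subspace spanned by the even-indexed basis vectors e₀, e₂, …, e_{2k−2}. -/
/-!
Pairing with `e_p` for even `p` reads off coordinates: `ω₁(x, e_p) = -x_{p+1}`, while
`ω₂(x, e_p)` only involves odd coordinates of `x`. So if `β_i` has no odd coordinates, then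
`ω₁(β_{i+1}, e_p) = ω₂(β_i, e_p) = 0` kills every odd coordinate of `β_{i+1}`; the anchor
condition starts this induction at `β₀`.
-/

open Matrix

noncomputable section

theorem Submodule.mem_span_range_single_of_forall_notMem_range {R η ι : Type*} [Semiring R]
    [Fintype η] [DecidableEq η] {f : ι → η} {x : η → R}
    (hx : ∀ m, m ∉ Set.range f → x m = 0) :
    x ∈ span R (Set.range fun j => Pi.single (f j) (1 : R)) := by
  rw [← Finset.univ_sum_single x]
  refine sum_mem fun m _ => ?_
  by_cases hm : m ∈ Set.range f
  · obtain ⟨j, rfl⟩ := hm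
    rw [← mul_one (x (f j)), ← smul_eq_mul, Pi.single_smul']
    exact smul_mem _ _ (subset_span ⟨j, rfl⟩)
  · rw [hx m hm, Pi.single_zero]
    exact zero_mem _

section

variable {n : ℕ}

theorem formOf_single_one (M : Matrix (Fin n) (Fin n) ℂ) (x : Fin n → ℂ) (j : Fin n) :
    formOf M x (Pi.single j 1) = (x ᵥ* M) j := by
  rw [formOf, dotProduct_mulVec, dotProduct_single_one]

theorem kronMat1_apply_of_even {i p : Fin n} (hp : Even p.val) :
    kronMat1 n i p = if i.val = p.val + 1 then -1 else 0 := by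
  have : ¬(Even i.val ∧ p.val = i.val + 1) := by
    rintro ⟨hi, hpi⟩
    rw [hpi] at hp
    exact Nat.not_even_iff_odd.mpr hi.add_one hp
  simp only [kronMat1, if_neg this, hp, true_and]

theorem vecMul_kronMat1_apply_of_even (y : Fin n → ℂ) {p m : Fin n} (hp : Even p.val)
    (hm : m.val = p.val + 1) : (y ᵥ* kronMat1 n) p = -y m := by
  simp only [vecMul, dotProduct, kronMat1_apply_of_even hp, ← hm, Fin.val_inj, mul_ite,
    mul_neg, mul_one, mul_zero, Finset.sum_ite_eq', Finset.mem_univ, if_true]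

theorem vecMul_kronMat2_apply_of_even {x : Fin n → ℂ} (hx : ∀ m : Fin n, Odd m.val → x m = 0)
    {p : Fin n} (hp : Even p.val) : (x ᵥ* kronMat2 n) p = 0 := by
  rw [vecMul, dotProduct]
  refine Finset.sum_eq_zero fun i _ => ?_
  by_cases hi : Even i.val
  · simp [kronMat2, hi, hp]
  · rw [hx i (Nat.not_even_iff_odd.mp hi), zero_mul]

theorem eq_zero_of_odd_of_vecMul_kronMat1 {y : Fin n → ℂ}
    (hy : ∀ p : Fin n, Even p.val → (y ᵥ* kronMat1 n) p = 0) (m : Fin n) (hm : Odd m.val) :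
    y m = 0 := by
  obtain ⟨t, ht⟩ := hm
  have hp : Even (2 * t) := even_two_mul t
  have h := vecMul_kronMat1_apply_of_even y (p := ⟨2 * t, by omega⟩) hp ht
  rw [hy _ hp] at h
  exact neg_eq_zero.mp h.symm

end

/-- an anchored Lenard chain on the Kronecker pair `K_{2k-1}`
lies in the span of the even-indexed basis vectors. -/
theorem kronecker_lenard_chain_in_even_span (k : ℕ)
    (β : ℕ → Fin (2 * k - 1) → ℂ)
    (hanch : ∀ w, formOf (kronMat1 (2 * k - 1)) (β 0) w = 0)
    (hrec : ∀ i w, formOf (kronMat2 (2 * k - 1)) (β i) w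
        = formOf (kronMat1 (2 * k - 1)) (β (i + 1)) w) :
    ∀ i, β i ∈ Submodule.span ℂ (Set.range fun j : Fin k =>
      (Pi.single (⟨2 * j.val, by have := j.isLt; omega⟩ : Fin (2 * k - 1)) 1 :
        Fin (2 * k - 1) → ℂ)) := by
  have hodd : ∀ i (m : Fin (2 * k - 1)), Odd m.val → β i m = 0 := by
    intro i
    induction i with
    | zero =>
      exact eq_zero_of_odd_of_vecMul_kronMat1 fun p _ => by rw [← formOf_single_one, hanch]
    | succ i ih =>
      refine eq_zero_of_odd_of_vecMul_kronMat1 fun p hp => ?_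
      rw [← formOf_single_one, ← hrec, formOf_single_one, vecMul_kronMat2_apply_of_even ih hp]
  refine fun i => Submodule.mem_span_range_single_of_forall_notMem_range fun m hm => hodd i m ?_
  by_contra hm_even
  obtain ⟨t, ht⟩ := Nat.not_odd_iff_even.mp hm_even
  exact hm ⟨⟨t, by omega⟩, Fin.ext (by simp only; omega)⟩
end
end
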